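/- Deterministic functional chain rule (Lemma 2.6 with vanishing diffusion): Let t ≥ 0, f ∈ C_p^{1,2}(Λ̂^t), τ ≥ 0, x ∈ 𝒞₀ and let ϑ : [τ,∞) → ℝ^d be continuous. Define X : ℝ → ℝ^d by X(s) := x(s-τ) for s < τ and X(s) := x(0) + ∫_τ^s ϑ(σ) dσ for s ≥ τ, and for s ≥ τ let X_s ∈ 𝒞₀ be given by X_s(θ) := X(s+θ), θ ∈ (-∞,0]. Then for all t̂, s with τ∨t ≤ t̂ ≤ s < ∞: f(s, X_s) = f(t̂, X_{t̂}) + ∫_{t̂}^s [ ∂_t f(σ, X_σ) + ⟨∂_x f(σ, X_σ), ϑ(σ)⟩ ] dσ. -/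

import Mathlib

open Filter Topology MeasureTheory Matrix
open scoped RealInnerProductSpace

noncomputable section

namespace PathHJB

/-- The domain `(-∞,0]` of the paths. -/
abbrev PathDom : Type := Set.Iic (0 : ℝ)

abbrev Eucl (d : ℕ) := EuclideanSpace ℝ (Fin d)

/-- Paths on `(-∞,0]` with values in `ℝ^d`. -/
abbrev Pth (d : ℕ) := PathDom → Eucl d

def zeroPt : PathDom := ⟨0, Set.self_mem_Iic⟩

/-- The sup norm `|x|_C`. -/
def normC {d : ℕ} (x : Pth d) : ℝ := ⨆ θ : PathDom, ‖x θ‖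

/-- The shifted path `x_h`. -/
def shift {d : ℕ} (x : Pth d) (h : ℝ) : Pth d := fun θ =>
  if hθ : -h ≤ θ.1 then x zeroPt
  else x ⟨θ.1 + h, Set.mem_Iic.mpr (by push_neg at hθ; linarith)⟩

/-- The vertical perturbation `x + v · 1_{{0}}`. -/
def vpert {d : ℕ} (x : Pth d) (v : Eucl d) : Pth d := fun θ =>
  if θ.1 = 0 then x θ + v else x θ

/-- Càdlàg: right-continuous with left limits. -/
def IsCadlag {d : ℕ} (x : Pth d) : Prop :=
  (∀ θ : PathDom, ContinuousWithinAt x {η : PathDom | θ.1 ≤ η.1} θ) ∧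
  (∀ θ : PathDom, ∃ L : Eucl d, Tendsto x (nhdsWithin θ {η : PathDom | η.1 < θ.1}) (nhds L))

/-- `𝒟₀`: càdlàg paths vanishing at `-∞`. -/
def D0 (d : ℕ) : Set (Pth d) := {x | IsCadlag x ∧ Tendsto x atBot (nhds 0)}

/-- `𝒞₀`: continuous paths vanishing at `-∞`. -/
def C0 (d : ℕ) : Set (Pth d) := {x | Continuous x ∧ Tendsto x atBot (nhds 0)}

/-- The metric `d_∞`. -/
def dInfty {d : ℕ} (p q : ℝ × Pth d) : ℝ :=
  if p.1 ≤ q.1 then |q.1 - p.1| + normC (shift p.2 (q.1 - p.1) - q.2)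
  else |p.1 - q.1| + normC (shift q.2 (p.1 - q.1) - p.2)

/-- `Λ̂^t = [t,∞) × 𝒟₀`. -/
def LamHat (d : ℕ) (t : ℝ) : Set (ℝ × Pth d) := {p | t ≤ p.1 ∧ p.2 ∈ D0 d}

/-- `Λ^t = [t,∞) × 𝒞₀`. -/
def Lam (d : ℕ) (t : ℝ) : Set (ℝ × Pth d) := {p | t ≤ p.1 ∧ p.2 ∈ C0 d}

def stdBasis (d : ℕ) (i : Fin d) : Eucl d := EuclideanSpace.single i 1

/-- Horizontal (Dupire) derivative. -/
def HasHorizDerivAt {d : ℕ} (f : ℝ × Pth d → ℝ) (p : ℝ × Pth d) (v : ℝ) : Prop :=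
  Tendsto (fun h : ℝ => (f (p.1 + h, shift p.2 h) - f p) / h) (𝓝[>] (0:ℝ)) (𝓝 v)

/-- Vertical (Dupire) derivative in direction `e_i`. -/
def HasVertDerivAt {d : ℕ} (f : ℝ × Pth d → ℝ) (p : ℝ × Pth d) (i : Fin d) (v : ℝ) : Prop :=
  Tendsto (fun h : ℝ => (f (p.1, vpert p.2 (h • stdBasis d i)) - f p) / h) (𝓝[≠] (0:ℝ)) (𝓝 v)

/-- Continuity on a set w.r.t. `d_∞`. -/
def DContinuousOn {d : ℕ} {E : Type*} [NormedAddCommGroup E]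
    (f : ℝ × Pth d → E) (S : Set (ℝ × Pth d)) : Prop :=
  ∀ p ∈ S, ∀ ε > (0:ℝ), ∃ δ > (0:ℝ), ∀ q ∈ S, dInfty p q < δ → ‖f q - f p‖ < ε

/-- Uniform continuity on a set w.r.t. `d_∞`. -/
def DUnifContOn {d : ℕ} {E : Type*} [NormedAddCommGroup E]
    (f : ℝ × Pth d → E) (S : Set (ℝ × Pth d)) : Prop :=
  ∀ ε > (0:ℝ), ∃ δ > (0:ℝ), ∀ p ∈ S, ∀ q ∈ S, dInfty p q < δ → ‖f q - f p‖ < ε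

def BoundedOn {d : ℕ} {E : Type*} [NormedAddCommGroup E]
    (f : ℝ × Pth d → E) (S : Set (ℝ × Pth d)) : Prop :=
  ∃ M : ℝ, ∀ p ∈ S, ‖f p‖ ≤ M

def PolyGrowthOn {d : ℕ} {E : Type*} [NormedAddCommGroup E]
    (f : ℝ × Pth d → E) (S : Set (ℝ × Pth d)) : Prop :=
  ∃ C : ℝ, ∃ k : ℕ, ∀ p ∈ S, ‖f p‖ ≤ C * (1 + |p.1| + normC p.2) ^ k

/-- `f ∈ C_p^{1,2}(Λ̂^t)`, with prescribed pathwise derivatives. -/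
structure IsCp12Hat (d : ℕ) (t : ℝ) (f : ℝ × Pth d → ℝ) (ft : ℝ × Pth d → ℝ)
    (fx : ℝ × Pth d → Eucl d) (fxx : ℝ × Pth d → Matrix (Fin d) (Fin d) ℝ) : Prop where
  horiz : ∀ p ∈ LamHat d t, HasHorizDerivAt f p (ft p)
  vert : ∀ p ∈ LamHat d t, ∀ i, HasVertDerivAt f p i (fx p i)
  vert2 : ∀ p ∈ LamHat d t, ∀ i j, HasVertDerivAt (fun q => fx q j) p i (fxx p i j)
  cont : DContinuousOn f (LamHat d t)
  cont_t : DContinuousOn ft (LamHat d t)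
  cont_x : DContinuousOn fx (LamHat d t)
  cont_xx : ∀ i j, DContinuousOn (fun p => fxx p i j) (LamHat d t)
  growth : PolyGrowthOn f (LamHat d t)
  growth_t : PolyGrowthOn ft (LamHat d t)
  growth_x : PolyGrowthOn fx (LamHat d t)
  growth_xx : ∀ i j, PolyGrowthOn (fun p => fxx p i j) (LamHat d t)

/-- Hilbert–Schmidt norm of a matrix. -/
def hsNorm {m n : ℕ} (A : Matrix (Fin m) (Fin n) ℝ) : ℝ :=
  Real.sqrt (∑ i, ∑ j, (A i j) ^ 2)

/-- The Hamiltonian `H`. -/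
def Ham {d n : ℕ} {U : Type*} (b : Pth d → U → Eucl d)
    (σ' : Pth d → U → Matrix (Fin d) (Fin n) ℝ) (q : Pth d → U → ℝ)
    (x : Pth d) (p : Eucl d) (l : Matrix (Fin d) (Fin d) ℝ) : ℝ :=
  ⨅ u : U, ((inner ℝ p (b x u) : ℝ) + (1/2) * (l * (σ' x u * (σ' x u)ᵀ)).trace + q x u)

/-- Hypothesis 4.2. -/
structure Hyp42 {d n : ℕ} {U : Type*} [PseudoMetricSpace U] (L : ℝ)
    (b : Pth d → U → Eucl d) (σ' : Pth d → U → Matrix (Fin d) (Fin n) ℝ)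
    (q : Pth d → U → ℝ) : Prop where
  pos : 0 < L
  continuous : ∀ x ∈ C0 d, ∀ u : U, ∀ ε > (0:ℝ), ∃ δ > (0:ℝ), ∀ y ∈ C0 d, ∀ u' : U,
    normC (x - y) < δ → dist u u' < δ →
    ‖b x u - b y u'‖ < ε ∧ hsNorm (σ' x u - σ' y u') < ε ∧ |q x u - q y u'| < ε
  bound_b : ∀ x ∈ C0 d, ∀ u : U, ‖b x u‖ ^ 2 ≤ L ^ 2 * (1 + normC x ^ 2)
  bound_σ : ∀ x ∈ C0 d, ∀ u : U, hsNorm (σ' x u) ^ 2 ≤ L ^ 2 * (1 + normC x ^ 2)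
  bound_q : ∀ x ∈ C0 d, ∀ u : U, (q x u) ^ 2 ≤ L ^ 2 * (1 + normC x ^ 2)
  lip_b : ∀ x ∈ C0 d, ∀ y ∈ C0 d, ∀ u : U, ‖b x u - b y u‖ ≤ L * normC (x - y)
  lip_σ : ∀ x ∈ C0 d, ∀ y ∈ C0 d, ∀ u : U, hsNorm (σ' x u - σ' y u) ≤ L * normC (x - y)
  lip_q : ∀ x ∈ C0 d, ∀ y ∈ C0 d, ∀ u : U, |q x u - q y u| ≤ L * normC (x - y)

/-- Viscosity subsolution of `-λ w + ∂_t w + H(x, ∂_x w, ∂_{xx} w) = 0`. -/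
def IsViscSubsol {d n : ℕ} {U : Type*} (lam : ℝ) (b : Pth d → U → Eucl d)
    (σ' : Pth d → U → Matrix (Fin d) (Fin n) ℝ) (q : Pth d → U → ℝ)
    (w : Pth d → ℝ) : Prop :=
  ∀ s : ℝ, 0 ≤ s → ∀ x ∈ C0 d,
    ∀ (φ φt : ℝ × Pth d → ℝ) (φx : ℝ × Pth d → Eucl d)
      (φxx : ℝ × Pth d → Matrix (Fin d) (Fin d) ℝ),
      IsCp12Hat d s φ φt φx φxx →
      w x - φ (s, x) = 0 →
      (∀ p ∈ Lam d s, w p.2 - φ p ≤ 0) →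
      0 ≤ -lam * w x + φt (s, x) + Ham b σ' q x (φx (s, x)) (φxx (s, x))

/-- Viscosity supersolution. -/
def IsViscSupersol {d n : ℕ} {U : Type*} (lam : ℝ) (b : Pth d → U → Eucl d)
    (σ' : Pth d → U → Matrix (Fin d) (Fin n) ℝ) (q : Pth d → U → ℝ)
    (w : Pth d → ℝ) : Prop :=
  ∀ s : ℝ, 0 ≤ s → ∀ x ∈ C0 d,
    ∀ (φ φt : ℝ × Pth d → ℝ) (φx : ℝ × Pth d → Eucl d)
      (φxx : ℝ × Pth d → Matrix (Fin d) (Fin d) ℝ),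
      IsCp12Hat d s φ φt φx φxx →
      w x + φ (s, x) = 0 →
      (∀ p ∈ Lam d s, 0 ≤ w p.2 + φ p) →
      -lam * w x - φt (s, x) + Ham b σ' q x (-φx (s, x)) (-φxx (s, x)) ≤ 0


/-- The two-argument functional `S_m(t,x,s,y)`. -/
def SmP {d : ℕ} (m : ℕ) (p q : ℝ × Pth d) : ℝ :=
  if normC (shift p.2 (max (q.1 - p.1) 0) - shift q.2 (max (p.1 - q.1) 0)) = 0 then 0
  else (normC (shift p.2 (max (q.1 - p.1) 0) - shift q.2 (max (p.1 - q.1) 0)) ^ (2*m)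
        - ‖p.2 zeroPt - q.2 zeroPt‖ ^ (2*m)) ^ 3
       / normC (shift p.2 (max (q.1 - p.1) 0) - shift q.2 (max (p.1 - q.1) 0)) ^ (4*m)

/-- `Υ^{m,M}(t,x,s,y)`. -/
def UpsP {d : ℕ} (m : ℕ) (M : ℝ) (p q : ℝ × Pth d) : ℝ :=
  SmP m p q + M * ‖p.2 zeroPt - q.2 zeroPt‖ ^ (2*m)

/-- `Ῡ^{m,M}(t,x,s,y) = Υ^{m,M}(t,x,s,y) + |s-t|²`. -/
def UpsBarP {d : ℕ} (m : ℕ) (M : ℝ) (p q : ℝ × Pth d) : ℝ :=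
  UpsP m M p q + (q.1 - p.1) ^ 2

/-- The single-path functional `Υ^{m,M}(x)`. -/
def Ups0 {d : ℕ} (m : ℕ) (M : ℝ) (x : Pth d) : ℝ :=
  (if normC x = 0 then 0
   else (normC x ^ (2*m) - ‖x zeroPt‖ ^ (2*m)) ^ 3 / normC x ^ (4*m))
  + M * ‖x zeroPt‖ ^ (2*m)

/-- `w̃^{t̂}` before taking the upper semicontinuous envelope:
the sup of `w(t,ξ)` over `ξ ∈ 𝒞₀` with `ξ(0) = x₀`. -/
def sliceSup {d : ℕ} (w : ℝ × Pth d → ℝ) (t : ℝ) (x0 : Eucl d) : ℝ :=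
  sSup {r : ℝ | ∃ ξ ∈ C0 d, ξ zeroPt = x0 ∧ r = w (t, ξ)}

def tildeW {d : ℕ} (w : ℝ × Pth d → ℝ) (tHat : ℝ) : ℝ × Eucl d → ℝ := fun p =>
  if tHat ≤ p.1 then sliceSup w p.1 p.2
  else sliceSup w tHat p.2 - Real.sqrt (tHat - p.1)

/-- Upper semicontinuous envelope. -/
def uscEnv {d : ℕ} (g : ℝ × Eucl d → ℝ) : ℝ × Eucl d → ℝ := fun p =>
  Filter.limsup g (nhds p)

/-- A local modulus of continuity. -/
structure LocalModulus (ρ : ℝ → ℝ → ℝ) : Prop where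
  cont : Continuous fun p : ℝ × ℝ => ρ p.1 p.2
  nonneg : ∀ t r, 0 ≤ t → 0 ≤ r → 0 ≤ ρ t r
  zero : ∀ r, 0 ≤ r → ρ 0 r = 0
  subadd : ∀ t s r, 0 ≤ t → 0 ≤ s → 0 ≤ r → ρ (t + s) r ≤ ρ t r + ρ s r
  mono : ∀ t r r', 0 ≤ t → 0 ≤ r → r ≤ r' → ρ t r ≤ ρ t r'

/-- Upper semicontinuity on a set w.r.t. `d_∞`. -/
def DUSCOn {d : ℕ} (w : ℝ × Pth d → ℝ) (S : Set (ℝ × Pth d)) : Prop :=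
  ∀ p ∈ S, ∀ ε > (0:ℝ), ∃ δ > (0:ℝ), ∀ q ∈ S, dInfty p q < δ → w q < w p + ε

def BddAboveOn {d : ℕ} (w : ℝ × Pth d → ℝ) (S : Set (ℝ × Pth d)) : Prop :=
  ∃ M : ℝ, ∀ p ∈ S, w p ≤ M

/-- `limsup_{t+|x|_C → ∞} w(t,x)/(t+|x|_C) < 0` on `Λ`. -/
def NegLimsupAtInfty {d : ℕ} (w : ℝ × Pth d → ℝ) : Prop :=
  ∃ c < (0:ℝ), ∃ R : ℝ, ∀ p ∈ Lam d 0, R ≤ p.1 + normC p.2 →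
    w p ≤ c * (p.1 + normC p.2)

/-- `φ ∈ C^{1,2}([0,∞) × ℝ^d)` with prescribed derivatives. -/
structure IsC12Fin (d : ℕ) (φ φt : ℝ × Eucl d → ℝ) (φx : ℝ × Eucl d → Eucl d)
    (φxx : ℝ × Eucl d → Matrix (Fin d) (Fin d) ℝ) : Prop where
  ht : ∀ p : ℝ × Eucl d, HasDerivAt (fun s => φ (s, p.2)) (φt p) p.1
  hx : ∀ p : ℝ × Eucl d, HasGradientAt (fun y => φ (p.1, y)) (φx p) p.2
  hxx : ∀ p : ℝ × Eucl d, ∀ i j,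
    HasDerivAt (fun h : ℝ => φx (p.1, p.2 + h • stdBasis d j) i) (φxx p i j) 0
  cont : Continuous φ
  cont_t : Continuous φt
  cont_x : Continuous φx
  cont_xx : ∀ i j, Continuous fun p => φxx p i j

/-- The class `Φ(t̂, x̂₀, T)` of Definition 6.1. -/
def PhiClass (d : ℕ) (tHat : ℝ) (xHat0 : Eucl d) (T : ℝ) (f : ℝ × Eucl d → ℝ) : Prop :=
  ∃ r > (0:ℝ), ∀ L > (0:ℝ),
    ∀ (φ φt : ℝ × Eucl d → ℝ) (φx : ℝ × Eucl d → Eucl d)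
      (φxx : ℝ × Eucl d → Matrix (Fin d) (Fin d) ℝ),
      IsC12Fin d φ φt φx φxx →
      ∀ t : ℝ, ∀ x0 : Eucl d, 0 < t → t < T →
        (∀ s : ℝ, ∀ y : Eucl d, 0 ≤ s → s ≤ T → f (s, y) - φ (s, y) ≤ f (t, x0) - φ (t, x0)) →
        ∃ C > (0:ℝ),
          (|t - tHat| + ‖x0 - xHat0‖ < r →
           |f (t, x0)| + ‖φx (t, x0)‖ + hsNorm (φxx (t, x0)) ≤ L →
           C ≤ φt (t, x0))

/-- Operator norm of a square matrix, via the associated Euclidean linear map. -/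
def matOpNorm {ι : Type*} [Fintype ι] [DecidableEq ι] (A : Matrix ι ι ℝ) : ℝ :=
  ‖LinearMap.toContinuousLinearMap (Matrix.toEuclideanLin A)‖

/-- The second-derivative matrix of `φ : ℝ^d × ℝ^d → ℝ` at a point, as a
`(2d) × (2d)` matrix indexed by `Fin d ⊕ Fin d`. -/
def hess2 {d : ℕ} (φ : Eucl d × Eucl d → ℝ) (z : Eucl d × Eucl d) :
    Matrix (Fin d ⊕ Fin d) (Fin d ⊕ Fin d) ℝ := fun k l =>
  iteratedFDeriv ℝ 2 φ z
    ![Sum.elim (fun i => ((stdBasis d i, 0) : Eucl d × Eucl d))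
        (fun j => ((0, stdBasis d j) : Eucl d × Eucl d)) k,
      Sum.elim (fun i => ((stdBasis d i, 0) : Eucl d × Eucl d))
        (fun j => ((0, stdBasis d j) : Eucl d × Eucl d)) l]

/-- Hessian matrix of `φ : ℝ^d → ℝ`. -/
def hess1 {d : ℕ} (φ : Eucl d → ℝ) (z : Eucl d) : Matrix (Fin d) (Fin d) ℝ := fun i j =>
  iteratedFDeriv ℝ 2 φ z ![stdBasis d i, stdBasis d j]


/-- The path `x - a_{t-t̂}` appearing in `S_m(t,x,t̂,a)` (for `t ≥ t̂`). -/
def zRel {d : ℕ} (tHat : ℝ) (a : Pth d) (p : ℝ × Pth d) : Pth d :=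
  shift p.2 (max (tHat - p.1) 0) - shift a (max (p.1 - tHat) 0)
/-- The solution of the ODE `dX = ϑ ds` with initial path `x` at time `τ`. -/
def detSol {d : ℕ} (τ : ℝ) (x : Pth d) (ϑ : ℝ → Eucl d) : ℝ → Eucl d := fun r =>
  if hr : r < τ then x ⟨r - τ, Set.mem_Iic.mpr (by linarith)⟩
  else x zeroPt + ∫ σ in τ..r, ϑ σ

/-- The history path `X_r` of `X` at time `r`. -/
def histAt {d : ℕ} (X : ℝ → Eucl d) (r : ℝ) : Pth d := fun θ => X (r + θ.1)


section ChainRuleAux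

variable {d : ℕ}

instance : Nonempty PathDom := ⟨zeroPt⟩

lemma normC_le {z : Pth d} {B : ℝ} (h : ∀ θ, ‖z θ‖ ≤ B) : normC z ≤ B :=
  ciSup_le h

lemma shift_eq {y : Pth d} {h : ℝ} (hh : 0 ≤ h) :
    shift y h = fun θ : PathDom => y ⟨min (θ.1 + h) 0, Set.mem_Iic.mpr (min_le_right _ _)⟩ := by
  funext θ
  by_cases hθ : -h ≤ θ.1
  · have h0 : min (θ.1 + h) 0 = 0 := min_eq_right (by linarith)
    simp only [shift, hθ, dif_pos]
    exact congrArg y (Subtype.ext (show (0:ℝ) = min (θ.1 + h) 0 from h0.symm)).symm |>.symm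
  · push_neg at hθ
    have h0 : min (θ.1 + h) 0 = θ.1 + h := min_eq_left (by linarith)
    simp only [shift, not_le.mpr hθ, dif_neg, not_false_iff]
    exact congrArg y (Subtype.ext (show (θ.1 + h : ℝ) = min (θ.1 + h) 0 from h0.symm)).symm |>.symm

lemma shift_zero (y : Pth d) : shift y 0 = y := by
  rw [shift_eq le_rfl]
  funext θ
  exact congrArg y (Subtype.ext (show min (θ.1 + 0) 0 = θ.1 by
    rw [add_zero]; exact min_eq_left θ.2))

lemma shift_apply_zeroPt {y : Pth d} {h : ℝ} (hh : 0 ≤ h) :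
    shift y h zeroPt = y zeroPt := by
  rw [shift_eq hh]
  exact congrArg y (Subtype.ext (show min ((zeroPt : PathDom).1 + h) 0 = (0:ℝ) by
    simp [zeroPt, hh]))

lemma shift_shift {y : Pth d} {h k : ℝ} (hh : 0 ≤ h) (hk : 0 ≤ k) :
    shift (shift y h) k = shift y (h + k) := by
  rw [shift_eq hh, shift_eq hk, shift_eq (by linarith : (0:ℝ) ≤ h + k)]
  funext θ
  refine congrArg y (Subtype.ext ?_)
  show min (min (θ.1 + k) 0 + h) 0 = min (θ.1 + (h + k)) 0
  rcases le_or_gt (θ.1 + k) 0 with h1 | h1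
  · have : θ.1 + k + h = θ.1 + (h + k) := by ring
    rw [min_eq_left h1, this]
  · rw [min_eq_right h1.le]
    rw [min_eq_right (by linarith), min_eq_right (by linarith)]

lemma vpert_vpert (z : Pth d) (v v' : Eucl d) :
    vpert (vpert z v) v' = vpert z (v + v') := by
  funext θ
  by_cases hθ : θ.1 = 0 <;> simp [vpert, hθ, add_assoc]

lemma vpert_zero_vec (z : Pth d) : vpert z 0 = z := by
  funext θ
  by_cases hθ : θ.1 = 0 <;> simp [vpert, hθ]

lemma vpert_apply_zeroPt (z : Pth d) (v : Eucl d) :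
    vpert z v zeroPt = z zeroPt + v := by
  simp [vpert, zeroPt]

lemma vpert_apply_ne (z : Pth d) (v : Eucl d) {θ : PathDom} (hθ : θ.1 ≠ 0) :
    vpert z v θ = z θ := by
  simp [vpert, hθ]

lemma normC_zero : normC (0 : Pth d) = 0 := by
  simp [normC]

lemma normC_vpert_sub_vpert (z : Pth d) (v v' : Eucl d) :
    normC (vpert z v - vpert z v') ≤ ‖v - v'‖ := by
  apply normC_le
  intro θ
  by_cases hθ : θ.1 = 0
  · simp only [Pi.sub_apply, vpert, hθ, if_pos]
    simp [add_sub_add_left_eq_sub]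
  · simp [Pi.sub_apply, vpert, hθ]


/-! ### Membership preservation -/

lemma C0_subset_D0 : C0 d ⊆ D0 d := by
  rintro y ⟨hc, hb⟩
  exact ⟨⟨fun θ => hc.continuousWithinAt,
    fun θ => ⟨y θ, hc.continuousAt.continuousWithinAt⟩⟩, hb⟩

/-- The reparametrization map underlying `shift`. -/
def shiftMap (h : ℝ) : PathDom → PathDom := fun η =>
  ⟨min (η.1 + h) 0, Set.mem_Iic.mpr (min_le_right _ _)⟩

lemma shiftMap_continuous (h : ℝ) : Continuous (shiftMap h) :=
  Continuous.subtype_mk ((continuous_subtype_val.add continuous_const).min continuous_const) _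

lemma shiftMap_monotone (h : ℝ) : Monotone (shiftMap h) := by
  intro a b hab
  simp only [shiftMap, Subtype.mk_le_mk]
  exact min_le_min (by linarith [Subtype.coe_le_coe.mpr hab]) le_rfl

lemma shift_eq_comp {y : Pth d} {h : ℝ} (hh : 0 ≤ h) :
    shift y h = y ∘ shiftMap h := shift_eq hh

lemma shift_mem_D0 {y : Pth d} (hy : y ∈ D0 d) {h : ℝ} (hh : 0 ≤ h) :
    shift y h ∈ D0 d := by
  rw [shift_eq_comp hh]
  obtain ⟨⟨hyr, hyl⟩, hyb⟩ := hy
  refine ⟨⟨?_, ?_⟩, ?_⟩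
  · intro θ
    exact (hyr (shiftMap h θ)).comp (shiftMap_continuous h).continuousWithinAt
      (fun η hη => shiftMap_monotone h hη)
  · intro θ
    by_cases hc : θ.1 + h ≤ 0
    · obtain ⟨L, hL⟩ := hyl (shiftMap h θ)
      refine ⟨L, hL.comp ?_⟩
      refine tendsto_nhdsWithin_iff.mpr ⟨(shiftMap_continuous h).continuousAt.continuousWithinAt, ?_⟩
      refine eventually_mem_nhdsWithin.mono (fun η (hη : η.1 < θ.1) => ?_)
      show (shiftMap h η).1 < (shiftMap h θ).1
      have h1 : (shiftMap h θ).1 = θ.1 + h := min_eq_left hc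
      have h2 : (shiftMap h η).1 = η.1 + h := min_eq_left (by linarith)
      rw [h1, h2]; linarith
    · push_neg at hc
      refine ⟨y zeroPt, Filter.Tendsto.congr' ?_ tendsto_const_nhds⟩
      have hO : {η : PathDom | -h < η.1} ∈ nhdsWithin θ {η : PathDom | η.1 < θ.1} := by
        apply mem_nhdsWithin_of_mem_nhds
        exact (isOpen_Ioi.preimage continuous_subtype_val).mem_nhds (by simpa using by linarith)
      refine Filter.eventuallyEq_of_mem hO (fun η (hη : -h < η.1) => ?_)
      show y zeroPt = y (shiftMap h η)
      exact congrArg y (Subtype.ext (show (0:ℝ) = min (η.1 + h) 0 from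
        (min_eq_right (by linarith)).symm))
  · refine hyb.comp (Filter.tendsto_atBot.mpr (fun b => ?_))
    have hb0 : b.1 - h ≤ 0 := by have := Set.mem_Iic.mp b.2; linarith
    refine (Filter.eventually_le_atBot (⟨b.1 - h, Set.mem_Iic.mpr hb0⟩ : PathDom)).mono
      (fun η hη => ?_)
    have : η.1 ≤ b.1 - h := hη
    show (shiftMap h η).1 ≤ b.1
    exact le_trans (min_le_left _ _) (by linarith)

lemma vpert_mem_D0 {z : Pth d} (hz : z ∈ D0 d) (v : Eucl d) :
    vpert z v ∈ D0 d := by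
  obtain ⟨⟨hzr, hzl⟩, hzb⟩ := hz
  have hlt : ∀ θ : PathDom, ∀ η : PathDom, η.1 < θ.1 → vpert z v η = z η := by
    intro θ η hη
    exact vpert_apply_ne z v (by have := Set.mem_Iic.mp θ.2; intro h; linarith [h ▸ hη])
  refine ⟨⟨?_, ?_⟩, ?_⟩
  · intro θ
    by_cases hθ : θ.1 = 0
    · have hθ' : θ = zeroPt := Subtype.ext hθ
      refine Filter.Tendsto.congr' ?_ tendsto_const_nhds
      refine eventually_mem_nhdsWithin.mono (fun η (hη : θ.1 ≤ η.1) => ?_)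
      have h1 : η.1 ≤ 0 := Set.mem_Iic.mp η.2
      have : η = θ := Subtype.ext (by linarith : η.1 = θ.1)
      rw [this]
    · have hθ' : θ.1 < 0 := lt_of_le_of_ne (Set.mem_Iic.mp θ.2) hθ
      have hO : {η : PathDom | η.1 < 0} ∈ nhdsWithin θ {η : PathDom | θ.1 ≤ η.1} :=
        mem_nhdsWithin_of_mem_nhds
          ((isOpen_Iio.preimage continuous_subtype_val).mem_nhds hθ')
      have heq : vpert z v =ᶠ[nhdsWithin θ {η : PathDom | θ.1 ≤ η.1}] z :=
        Filter.eventuallyEq_of_mem hO (fun η (hη : η.1 < 0) => vpert_apply_ne z v (ne_of_lt hη))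
      have h2 := (hzr θ).congr' heq.symm
      have hv : vpert z v θ = z θ := vpert_apply_ne z v hθ
      show Filter.Tendsto (vpert z v) (nhdsWithin θ {η : PathDom | θ.1 ≤ η.1})
        (nhds (vpert z v θ))
      rw [hv]
      exact h2
  · intro θ
    obtain ⟨L, hL⟩ := hzl θ
    refine ⟨L, Filter.Tendsto.congr' ?_ hL⟩
    exact eventually_mem_nhdsWithin.mono (fun η (hη : η.1 < θ.1) => (hlt θ η hη).symm)
  · refine Filter.Tendsto.congr' ?_ hzb
    refine (Filter.eventually_le_atBot (⟨-1, Set.mem_Iic.mpr (by norm_num)⟩ : PathDom)).mono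
      (fun η (hη : η.1 ≤ -1) => ?_)
    exact (vpert_apply_ne z v (by intro h; rw [h] at hη; linarith)).symm

lemma histAt_mem_C0 {X : ℝ → Eucl d} (hXc : Continuous X) (hX0 : Filter.Tendsto X Filter.atBot (nhds 0))
    (r : ℝ) : histAt X r ∈ C0 d := by
  constructor
  · exact hXc.comp (continuous_const.add continuous_subtype_val)
  · refine hX0.comp (Filter.tendsto_atBot.mpr (fun b => ?_))
    refine (Filter.eventually_le_atBot (⟨min (b - r) 0, Set.mem_Iic.mpr (min_le_right _ _)⟩ :
      PathDom)).mono (fun η (hη : η.1 ≤ min (b - r) 0) => ?_)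
    show r + η.1 ≤ b
    have := le_trans hη (min_le_left _ _)
    linarith


/-! ### Continuity transfer and distance computations -/

lemma continuousOn_comp_dC {E : Type*} [NormedAddCommGroup E] {t : ℝ} {F : ℝ × Pth d → E}
    (hF : DContinuousOn F (LamHat d t)) {γ : ℝ → ℝ × Pth d} {S : Set ℝ} {L : ℝ}
    (hmem : ∀ r ∈ S, γ r ∈ LamHat d t)
    (hlip : ∀ r ∈ S, ∀ r' ∈ S, dInfty (γ r) (γ r') ≤ L * |r' - r|) :
    ContinuousOn (fun r => F (γ r)) S := by
  intro r hr
  rw [Metric.continuousWithinAt_iff]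
  intro ε hε
  obtain ⟨δ, hδ, hδ'⟩ := hF (γ r) (hmem r hr) ε hε
  refine ⟨δ / (max L 1), by positivity, fun r' hr' hd => ?_⟩
  rw [dist_eq_norm]
  apply hδ' (γ r') (hmem r' hr')
  have h1 : dInfty (γ r) (γ r') ≤ L * |r' - r| := hlip r hr r' hr'
  have h2 : L * |r' - r| ≤ (max L 1) * |r' - r| :=
    mul_le_mul_of_nonneg_right (le_max_left _ _) (abs_nonneg _)
  have h3 : |r' - r| < δ / (max L 1) := by rwa [Real.dist_eq] at hd
  have h4 : (0:ℝ) < max L 1 := lt_of_lt_of_le one_pos (le_max_right _ _)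
  calc dInfty (γ r) (γ r') ≤ (max L 1) * |r' - r| := le_trans h1 h2
    _ < (max L 1) * (δ / max L 1) := by exact mul_lt_mul_of_pos_left h3 h4
    _ = δ := by field_simp

lemma dInfty_eq_time (u : ℝ) (p q : Pth d) : dInfty (u, p) (u, q) = normC (p - q) := by
  simp [dInfty, shift_zero]

lemma dInfty_horiz {y : Pth d} {u : ℝ} {r r' : ℝ} (h0 : 0 ≤ r) (h0' : 0 ≤ r') :
    dInfty (u + r, shift y r) (u + r', shift y r') ≤ 1 * |r' - r| := by
  unfold dInfty
  split_ifs with h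
  · have hrr : r ≤ r' := by simpa using h
    have e : u + r' - (u + r) = r' - r := by ring
    rw [e, shift_shift h0 (by linarith), show r + (r' - r) = r' by ring, sub_self, normC_zero,
      add_zero, one_mul]
  · have hrr : r' ≤ r := by simp at h; linarith
    have e : u + r - (u + r') = r - r' := by ring
    rw [e, shift_shift h0' (by linarith), show r' + (r - r') = r by ring, sub_self, normC_zero,
      add_zero, one_mul, abs_sub_comm]

/-! ### Horizontal fundamental theorem of calculus -/

lemma ftcH {t : ℝ} {f ft : ℝ × Pth d → ℝ}
    (hhoriz : ∀ p ∈ LamHat d t, HasHorizDerivAt f p (ft p))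
    (hcf : DContinuousOn f (LamHat d t)) (hcft : DContinuousOn ft (LamHat d t))
    {u : ℝ} (hu : t ≤ u) {y : Pth d} (hy : y ∈ D0 d) {δ : ℝ} (hδ : 0 ≤ δ) :
    f (u + δ, shift y δ) - f (u, y) = ∫ r in (0:ℝ)..δ, ft (u + r, shift y r) := by
  have hmem : ∀ r ∈ Set.Ici (0:ℝ), ((fun r => (u + r, shift y r)) r) ∈ LamHat d t := by
    intro r hr
    have hr' : (0:ℝ) ≤ r := hr
    exact ⟨show t ≤ u + r by linarith, shift_mem_D0 hy hr'⟩
  have hlip : ∀ r ∈ Set.Ici (0:ℝ), ∀ r' ∈ Set.Ici (0:ℝ),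
      dInfty (u + r, shift y r) (u + r', shift y r') ≤ 1 * |r' - r| :=
    fun r hr r' hr' => dInfty_horiz hr hr'
  have hφc : ContinuousOn (fun r => f (u + r, shift y r)) (Set.Ici 0) :=
    continuousOn_comp_dC hcf hmem hlip
  have hψc : ContinuousOn (fun r => ft (u + r, shift y r)) (Set.Ici 0) :=
    continuousOn_comp_dC hcft hmem hlip
  have hd : ∀ r ∈ Set.Ico (0:ℝ) δ,
      HasDerivWithinAt (fun r => f (u + r, shift y r)) (ft (u + r, shift y r)) (Set.Ioi r) r := by
    intro r hr
    have hr0 : (0:ℝ) ≤ r := hr.1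
    have hp := hhoriz (u + r, shift y r) (hmem r hr0)
    rw [hasDerivWithinAt_iff_tendsto_slope]
    rw [show Set.Ioi r \ {r} = Set.Ioi r from Set.diff_singleton_eq_self (by simp)]
    have hmap : Filter.Tendsto (fun b => b - r) (nhdsWithin r (Set.Ioi r))
        (nhdsWithin 0 (Set.Ioi 0)) := by
      refine tendsto_nhdsWithin_iff.mpr ⟨?_, ?_⟩
      · have : Filter.Tendsto (fun b : ℝ => b - r) (nhds r) (nhds (r - r)) :=
          (continuous_id.sub continuous_const).continuousAt
        rw [sub_self] at this
        exact this.mono_left nhdsWithin_le_nhds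
      · exact eventually_mem_nhdsWithin.mono (fun b hb => by
          simp only [Set.mem_Ioi] at hb ⊢; linarith)
    refine Filter.Tendsto.congr' ?_ (hp.comp hmap)
    refine eventually_mem_nhdsWithin.mono (fun b hb => ?_)
    have hbr : (0:ℝ) ≤ b - r := by simp only [Set.mem_Ioi] at hb; linarith
    show (f ((u + r) + (b - r), shift (shift y r) (b - r)) - f (u + r, shift y r)) / (b - r) = _
    rw [slope_def_field, shift_shift hr0 hbr, show (u + r) + (b - r) = u + b by ring,
      show r + (b - r) = b by ring]
  have hint : IntervalIntegrable (fun r => ft (u + r, shift y r)) MeasureTheory.volume 0 δ :=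
    (hψc.mono (by rw [Set.uIcc_of_le hδ]; exact Set.Icc_subset_Ici_self)).intervalIntegrable
  have := intervalIntegral.integral_eq_sub_of_hasDeriv_right_of_le hδ
    (hφc.mono Set.Icc_subset_Ici_self)
    (fun r hr => hd r ⟨hr.1.le, hr.2⟩) hint
  rw [this]
  simp [shift_zero]


/-! ### Vertical fundamental theorem of calculus -/

/-- Partial "staircase" sums of a vector. -/
def stair (w : Eucl d) (m : ℕ) : Eucl d :=
  ∑ i : Fin d, if (i : ℕ) < m then w i • stdBasis d i else 0

lemma stair_zero (w : Eucl d) : stair w 0 = 0 := by simp [stair]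

lemma stair_le_card (w : Eucl d) {m : ℕ} (hm : d ≤ m) : stair w m = stair w d := by
  unfold stair
  refine Finset.sum_congr rfl (fun i _ => ?_)
  rw [if_pos (lt_of_lt_of_le i.isLt hm), if_pos i.isLt]

lemma stair_card (w : Eucl d) : stair w d = w := by
  have h1 : stair w d = ∑ i : Fin d, w i • stdBasis d i := by
    unfold stair
    exact Finset.sum_congr rfl (fun i _ => if_pos i.isLt)
  rw [h1]
  ext j
  rw [show ((∑ i : Fin d, w i • stdBasis d i : Eucl d)) j
    = ∑ i : Fin d, (w i • stdBasis d i : Eucl d) j from by rw [WithLp.ofLp_sum]; exact Finset.sum_apply j _ _]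
  simp [stdBasis, EuclideanSpace.single_apply]

lemma stair_succ (w : Eucl d) (m : ℕ) (hm : m < d) :
    stair w (m + 1) = stair w m + w ⟨m, hm⟩ • stdBasis d ⟨m, hm⟩ := by
  unfold stair
  have key : ∀ i : Fin d, (if (i:ℕ) < m + 1 then w i • stdBasis d i else 0)
      = (if (i:ℕ) < m then w i • stdBasis d i else 0)
        + (if i = ⟨m, hm⟩ then w i • stdBasis d i else 0) := by
    intro i
    rcases lt_trichotomy (i:ℕ) m with h | h | h
    · rw [if_pos (by omega), if_pos h,
        if_neg (fun he => by rw [he] at h; simp at h), add_zero]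
    · rw [if_pos (by omega), if_neg (by omega), if_pos (Fin.ext h), zero_add]
    · rw [if_neg (by omega), if_neg (by omega),
        if_neg (fun he => by rw [he] at h; simp at h), zero_add]
  simp_rw [key]
  rw [Finset.sum_add_distrib]
  congr 1
  simp

lemma abs_coord_le_norm (v : Eucl d) (i : Fin d) : |v i| ≤ ‖v‖ := by
  rw [EuclideanSpace.norm_eq v, ← Real.sqrt_sq_eq_abs]
  apply Real.sqrt_le_sqrt
  have : |v i| ^ 2 ≤ ∑ j : Fin d, ‖v j‖ ^ 2 := by
    have := Finset.single_le_sum (f := fun j : Fin d => ‖v j‖ ^ 2)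
      (fun j _ => sq_nonneg _) (Finset.mem_univ i)
    simpa [Real.norm_eq_abs, sq_abs] using this
  simpa [sq_abs] using this

lemma norm_stair_le (w : Eucl d) (m : ℕ) : ‖stair w m‖ ≤ (d : ℝ) * ‖w‖ := by
  unfold stair
  refine le_trans (norm_sum_le _ _) ?_
  have h1 : ∀ i : Fin d, ‖if (i:ℕ) < m then w i • stdBasis d i else 0‖ ≤ ‖w‖ := by
    intro i
    by_cases h : (i:ℕ) < m
    · rw [if_pos h, norm_smul]
      simp only [stdBasis, EuclideanSpace.norm_single, norm_one, mul_one, Real.norm_eq_abs]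
      exact abs_coord_le_norm w i
    · rw [if_neg h, norm_zero]
      exact norm_nonneg _
  calc ∑ i : Fin d, ‖if (i:ℕ) < m then w i • stdBasis d i else 0‖
      ≤ ∑ _i : Fin d, ‖w‖ := Finset.sum_le_sum (fun i _ => h1 i)
    _ = (d : ℝ) * ‖w‖ := by simp [Finset.sum_const, Finset.card_univ, nsmul_eq_mul]

lemma ftcV_step {t : ℝ} {f : ℝ × Pth d → ℝ} {fx : ℝ × Pth d → Eucl d}
    (hvert : ∀ p ∈ LamHat d t, ∀ i, HasVertDerivAt f p i (fx p i))
    (hcfx : DContinuousOn fx (LamHat d t))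
    {u : ℝ} (hu : t ≤ u) {z : Pth d} (hz : z ∈ D0 d) (c : Eucl d) (j : Fin d) (wj : ℝ) :
    f (u, vpert z (c + wj • stdBasis d j)) - f (u, vpert z c)
      = ∫ a in (0:ℝ)..1, wj * fx (u, vpert z (c + (a * wj) • stdBasis d j)) j := by
  set g : ℝ → ℝ := fun a => f (u, vpert z (c + (a * wj) • stdBasis d j)) with hg
  have hmem : ∀ a : ℝ, (u, vpert z (c + (a * wj) • stdBasis d j)) ∈ LamHat d t :=
    fun a => ⟨hu, vpert_mem_D0 hz _⟩
  have hder : ∀ a : ℝ,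
      HasDerivAt g (wj * fx (u, vpert z (c + (a * wj) • stdBasis d j)) j) a := by
    intro a
    by_cases hw : wj = 0
    · have hgc : g = fun _ => f (u, vpert z c) := by
        funext b; simp [hg, hw]
      rw [hgc, hw, zero_mul]
      exact hasDerivAt_const _ _
    · set p' : ℝ × Pth d := (u, vpert z (c + (a * wj) • stdBasis d j)) with hp'
      have hp := hvert p' (hmem a) j
      rw [hasDerivAt_iff_tendsto_slope]
      have hmap : Filter.Tendsto (fun b : ℝ => (b - a) * wj) (nhdsWithin a {a}ᶜ)
          (nhdsWithin 0 {0}ᶜ) := by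
        refine tendsto_nhdsWithin_iff.mpr ⟨?_, ?_⟩
        · have : Filter.Tendsto (fun b : ℝ => (b - a) * wj) (nhds a) (nhds ((a - a) * wj)) :=
            ((continuous_id.sub continuous_const).mul continuous_const).continuousAt
          rw [sub_self, zero_mul] at this
          exact this.mono_left nhdsWithin_le_nhds
        · exact eventually_mem_nhdsWithin.mono (fun b hb => by
            simp only [Set.mem_compl_iff, Set.mem_singleton_iff] at hb ⊢
            exact mul_ne_zero (sub_ne_zero.mpr hb) hw)
      have hcomp := (hp.comp hmap).const_mul wj
      refine Filter.Tendsto.congr' ?_ hcomp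
      refine eventually_mem_nhdsWithin.mono (fun b hb => ?_)
      have hba : b - a ≠ 0 := sub_ne_zero.mpr
        (by simpa [Set.mem_compl_iff, Set.mem_singleton_iff] using hb)
      have hvv : vpert p'.2 (((b - a) * wj) • stdBasis d j)
          = vpert z (c + (b * wj) • stdBasis d j) := by
        rw [hp', vpert_vpert]
        congr 1
        rw [add_assoc, ← add_smul]
        congr 2
        ring
      show wj * ((f (u, vpert p'.2 (((b - a) * wj) • stdBasis d j)) - f p') / ((b - a) * wj))
        = slope g a b
      rw [slope_def_field, hvv]
      have hnum : f (u, vpert z (c + (b * wj) • stdBasis d j)) - f p' = g b - g a := by rfl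
      rw [hnum]
      field_simp
  have hcont : ContinuousOn (fun a => wj * fx (u, vpert z (c + (a * wj) • stdBasis d j)) j)
      (Set.uIcc 0 1) := by
    have hfx : ContinuousOn (fun a => fx (u, vpert z (c + (a * wj) • stdBasis d j)))
        (Set.uIcc 0 1) := by
      apply continuousOn_comp_dC hcfx (fun a _ => hmem a) (L := |wj|)
      intro a _ b _
      rw [dInfty_eq_time]
      refine le_trans (normC_vpert_sub_vpert _ _ _) ?_
      have hvec : c + (a * wj) • stdBasis d j - (c + (b * wj) • stdBasis d j)
          = ((a - b) * wj) • stdBasis d j := by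
        rw [add_sub_add_left_eq_sub, ← sub_smul]; congr 1; ring
      refine le_of_eq ?_
      rw [hvec, norm_smul]
      simp only [stdBasis, EuclideanSpace.norm_single, norm_one, mul_one, Real.norm_eq_abs]
      rw [abs_mul, abs_sub_comm]
      exact mul_comm _ _
    exact continuousOn_const.mul (by
      exact (PiLp.continuous_apply 2 _ j).comp_continuousOn hfx)
  have hint : IntervalIntegrable (fun a => wj * fx (u, vpert z (c + (a * wj) • stdBasis d j)) j)
      MeasureTheory.volume 0 1 := hcont.intervalIntegrable
  have := intervalIntegral.integral_eq_sub_of_hasDerivAt (fun a _ => hder a) hint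
  rw [this]
  show _ = f (u, vpert z (c + ((1:ℝ) * wj) • stdBasis d j))
    - f (u, vpert z (c + ((0:ℝ) * wj) • stdBasis d j))
  rw [one_mul, zero_mul, zero_smul, add_zero]

lemma ftcV {t : ℝ} {f : ℝ × Pth d → ℝ} {fx : ℝ × Pth d → Eucl d}
    (hvert : ∀ p ∈ LamHat d t, ∀ i, HasVertDerivAt f p i (fx p i))
    (hcfx : DContinuousOn fx (LamHat d t))
    {u : ℝ} (hu : t ≤ u) {z : Pth d} (hz : z ∈ D0 d) (w : Eucl d) :
    f (u, vpert z w) - f (u, z)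
      = ∑ j : Fin d, ∫ a in (0:ℝ)..1,
          w j * fx (u, vpert z (stair w (j:ℕ) + (a * w j) • stdBasis d j)) j := by
  have main : ∀ m : ℕ, f (u, vpert z (stair w m)) - f (u, z)
      = ∑ j ∈ Finset.univ.filter (fun j : Fin d => (j:ℕ) < m), ∫ a in (0:ℝ)..1,
          w j * fx (u, vpert z (stair w (j:ℕ) + (a * w j) • stdBasis d j)) j := by
    intro m
    induction m with
    | zero => simp [stair_zero, vpert_zero_vec]
    | succ m ih =>
      by_cases hm : m < d
      · have hstep := ftcV_step hvert hcfx hu hz (stair w m) ⟨m, hm⟩ (w ⟨m, hm⟩)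
        have hfil : Finset.univ.filter (fun j : Fin d => (j:ℕ) < m + 1)
            = insert (⟨m, hm⟩ : Fin d) (Finset.univ.filter (fun j : Fin d => (j:ℕ) < m)) := by
          ext j
          simp only [Finset.mem_filter, Finset.mem_univ, true_and, Finset.mem_insert]
          constructor
          · intro h
            rcases Nat.lt_succ_iff_lt_or_eq.mp h with h' | h'
            · exact Or.inr h'
            · exact Or.inl (Fin.ext h')
          · rintro (h | h)
            · rw [h]; show m < m + 1; omega
            · omega
        rw [hfil, Finset.sum_insert (by simp)]
        rw [stair_succ w m hm]
        have : f (u, vpert z (stair w m + w ⟨m, hm⟩ • stdBasis d ⟨m, hm⟩)) - f (u, z)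
            = (f (u, vpert z (stair w m + w ⟨m, hm⟩ • stdBasis d ⟨m, hm⟩))
                - f (u, vpert z (stair w m))) + (f (u, vpert z (stair w m)) - f (u, z)) := by
          ring
        rw [this, hstep, ih]
      · have h1 : stair w (m + 1) = stair w m := by
          rw [stair_le_card w (by omega : d ≤ m + 1), stair_le_card w (by omega : d ≤ m)]
        have h2 : Finset.univ.filter (fun j : Fin d => (j:ℕ) < m + 1)
            = Finset.univ.filter (fun j : Fin d => (j:ℕ) < m) := by
          ext j
          simp only [Finset.mem_filter, Finset.mem_univ, true_and]
          have := j.isLt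
          omega
        rw [h1, h2, ih]
  have := main d
  rw [stair_card] at this
  rw [this]
  congr 1
  rw [Finset.filter_true_of_mem (fun j _ => j.isLt)]


/-! ### The grid clamp and the approximating paths -/

/-- Clamp a time to the grid `tb + ℕ·δ` (identity left of `tb`). -/
def clampT (tb δ r : ℝ) : ℝ := if r ≤ tb then r else tb + δ * ⌊(r - tb)/δ⌋

lemma clampT_le {tb δ r : ℝ} (hδ : 0 < δ) : clampT tb δ r ≤ r := by
  unfold clampT
  split_ifs with h
  · exact le_rfl
  · push_neg at h
    have h1 : (⌊(r - tb)/δ⌋ : ℝ) ≤ (r - tb)/δ := Int.floor_le _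
    have h2 : δ * (⌊(r - tb)/δ⌋ : ℝ) ≤ δ * ((r - tb)/δ) :=
      mul_le_mul_of_nonneg_left h1 hδ.le
    have h3 : δ * ((r - tb)/δ) = r - tb := by field_simp
    linarith

lemma clampT_gap {tb δ r : ℝ} (hδ : 0 < δ) : r - clampT tb δ r ≤ δ := by
  unfold clampT
  split_ifs with h
  · linarith
  · push_neg at h
    have h1 : (r - tb)/δ < ⌊(r - tb)/δ⌋ + 1 := Int.lt_floor_add_one _
    have h2 : δ * ((r - tb)/δ) < δ * ((⌊(r - tb)/δ⌋ : ℝ) + 1) :=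
      mul_lt_mul_of_pos_left h1 hδ
    have h3 : δ * ((r - tb)/δ) = r - tb := by field_simp
    nlinarith

lemma clampT_grid {tb δ : ℝ} (hδ : 0 < δ) (k : ℕ) :
    clampT tb δ (tb + k * δ) = tb + k * δ := by
  unfold clampT
  rcases Nat.eq_zero_or_pos k with hk | hk
  · subst hk; simp
  · have hpos : (0:ℝ) < k * δ := mul_pos (by exact_mod_cast hk) hδ
    rw [if_neg (by linarith)]
    have h1 : (tb + k * δ - tb)/δ = (k : ℝ) := by field_simp; ring
    rw [h1]
    rw [show ((k : ℝ)) = ((k : ℤ) : ℝ) by push_cast; ring, Int.floor_intCast]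
    push_cast; ring

lemma clampT_interval {tb δ r : ℝ} (hδ : 0 < δ) (k : ℕ)
    (h1 : tb + k * δ ≤ r) (h2 : r < tb + (k + 1 : ℕ) * δ) :
    clampT tb δ r = tb + k * δ := by
  unfold clampT
  split_ifs with h
  · -- r ≤ tb forces k = 0 and r = tb
    have hk0 : (k : ℝ) * δ ≤ 0 := by linarith
    have hk : k = 0 := by
      by_contra hk
      have : (0:ℝ) < k * δ := mul_pos (by exact_mod_cast Nat.pos_of_ne_zero hk) hδ
      linarith
    subst hk
    simp only [Nat.cast_zero, zero_mul, add_zero] at h1 ⊢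
    linarith
  · push_neg at h
    have hfl : ⌊(r - tb)/δ⌋ = (k : ℤ) := by
      rw [Int.floor_eq_iff]
      constructor
      · rw [le_div_iff₀ hδ]; push_cast; linarith
      · rw [div_lt_iff₀ hδ]; push_cast at h2 ⊢; linarith
    rw [hfl]
    push_cast; ring

/-- The piecewise-frozen approximations of the path history. -/
def approxPath (X : ℝ → Eucl d) (tb δ : ℝ) : ℕ → Pth d
  | 0 => histAt X tb
  | k+1 => vpert (shift (approxPath X tb δ k) δ)
      (X (tb + (k+1 : ℕ) * δ) - X (tb + k * δ))

lemma approxPath_apply {X : ℝ → Eucl d} {tb δ : ℝ} (hδ : 0 < δ) (k : ℕ) (θ : PathDom) :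
    approxPath X tb δ k θ = X (clampT tb δ (tb + k * δ + θ.1)) := by
  induction k generalizing θ with
  | zero =>
    show X (tb + θ.1) = _
    have hθ : θ.1 ≤ 0 := Set.mem_Iic.mp θ.2
    rw [show clampT tb δ (tb + (0:ℕ) * δ + θ.1) = tb + (0:ℕ) * δ + θ.1 from
      if_pos (by push_cast; linarith)]
    push_cast; ring_nf
  | succ k ih =>
    by_cases hθ0 : θ.1 = 0
    · have hθ : θ = zeroPt := Subtype.ext hθ0
      subst hθ
      show vpert _ _ zeroPt = _
      rw [vpert_apply_zeroPt, shift_apply_zeroPt hδ.le, ih zeroPt]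
      have hz : (zeroPt : PathDom).1 = 0 := rfl
      rw [hz, add_zero, add_zero, clampT_grid hδ, clampT_grid hδ]
      abel
    · show vpert _ _ θ = _
      rw [vpert_apply_ne _ _ hθ0, shift_eq hδ.le]
      have hθneg : θ.1 < 0 := lt_of_le_of_ne (Set.mem_Iic.mp θ.2) hθ0
      show approxPath X tb δ k ⟨min (θ.1 + δ) 0, Set.mem_Iic.mpr (min_le_right _ _)⟩
        = X (clampT tb δ (tb + (k+1 : ℕ) * δ + θ.1))
      rw [ih]
      by_cases hc : θ.1 + δ ≤ 0
      · have hmin : min (θ.1 + δ) 0 = θ.1 + δ := min_eq_left hc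
        refine congrArg X (congrArg (clampT tb δ) ?_)
        show tb + (k:ℕ) * δ + min (θ.1 + δ) 0 = tb + ((k+1:ℕ):ℝ) * δ + θ.1
        rw [hmin]; push_cast; ring
      · push_neg at hc
        have hmin : min (θ.1 + δ) 0 = 0 := min_eq_right hc.le
        have e1 : tb + (k:ℕ) * δ
            + ((⟨min (θ.1 + δ) 0, Set.mem_Iic.mpr (min_le_right _ _)⟩ : PathDom)).1
            = tb + (k:ℕ) * δ := by
          show tb + (k:ℕ) * δ + min (θ.1 + δ) 0 = tb + (k:ℕ) * δ
          rw [hmin, add_zero]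
        rw [e1, clampT_grid hδ]
        rw [clampT_interval hδ k (by push_cast; linarith) (by push_cast; linarith)]

lemma approxPath_mem_D0 {X : ℝ → Eucl d} {tb δ : ℝ} (hδ : 0 ≤ δ)
    (hX : histAt X tb ∈ D0 d) (k : ℕ) : approxPath X tb δ k ∈ D0 d := by
  induction k with
  | zero => exact hX
  | succ k ih => exact vpert_mem_D0 (shift_mem_D0 ih hδ) _


/-! ### Properties of the controlled path -/

lemma detSol_eq_of_ge {τ : ℝ} {x : Pth d} {ϑ : ℝ → Eucl d} {r : ℝ} (hr : τ ≤ r) :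
    detSol τ x ϑ r = x zeroPt + ∫ σ in τ..r, ϑ σ := dif_neg (not_lt.mpr hr)

lemma detSol_continuous {τ : ℝ} {x : Pth d} {ϑ : ℝ → Eucl d} (hx : x ∈ C0 d)
    (hϑ : ContinuousOn ϑ (Set.Ici τ)) : Continuous (detSol τ x ϑ) := by
  have hxc : Continuous x := hx.1
  have hF1 : Continuous (fun r : ℝ => x ⟨min (r - τ) 0, Set.mem_Iic.mpr (min_le_right _ _)⟩) :=
    hxc.comp (Continuous.subtype_mk ((continuous_id.sub continuous_const).min
      continuous_const) _)
  have hprim : ∀ b : ℝ, τ < b → ContinuousOn (fun r => ∫ σ in τ..r, ϑ σ) (Set.Icc τ b) := by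
    intro b hb
    have hi : MeasureTheory.IntegrableOn ϑ (Set.uIcc τ b) MeasureTheory.volume := by
      rw [Set.uIcc_of_le hb.le]
      exact (hϑ.mono (Set.Icc_subset_Ici_self)).integrableOn_Icc
    have := intervalIntegral.continuousOn_primitive_interval hi
    rwa [Set.uIcc_of_le hb.le] at this
  have hlt : ∀ r : ℝ, r < τ →
      detSol τ x ϑ r = x ⟨min (r - τ) 0, Set.mem_Iic.mpr (min_le_right _ _)⟩ := by
    intro r hr
    rw [show detSol τ x ϑ r = x ⟨r - τ, Set.mem_Iic.mpr (by linarith)⟩ from dif_pos hr]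
    exact congrArg x (Subtype.ext (min_eq_left (by linarith : r - τ ≤ 0)).symm)
  rw [continuous_iff_continuousAt]
  intro r
  rcases lt_trichotomy r τ with hr | hr | hr
  · refine ContinuousAt.congr hF1.continuousAt ?_
    exact Filter.eventuallyEq_of_mem (isOpen_Iio.mem_nhds hr) (fun r' hr' => (hlt r' hr').symm)
  · subst hr
    rw [continuousAt_iff_continuous_left_right]
    constructor
    · refine ContinuousWithinAt.congr hF1.continuousAt.continuousWithinAt ?_ ?_
      · intro r' hr'
        rcases lt_or_eq_of_le (Set.mem_Iic.mp hr') with h | h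
        · exact hlt r' h
        · subst h
          rw [detSol_eq_of_ge le_rfl, intervalIntegral.integral_same, add_zero]
          exact congrArg x (Subtype.ext (by simp [zeroPt]))
      · rw [detSol_eq_of_ge le_rfl, intervalIntegral.integral_same, add_zero]
        exact congrArg x (Subtype.ext (by simp [zeroPt]))
    · have hP : ContinuousWithinAt (fun r' => x zeroPt + ∫ σ in r..r', ϑ σ) (Set.Ici r) r := by
        have h1 := (hprim (r + 1) (by linarith)) r (Set.mem_Icc.mpr ⟨le_rfl, by linarith⟩)
        have h2 : ContinuousWithinAt (fun r' => ∫ σ in r..r', ϑ σ) (Set.Ici r) r := by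
          show Filter.Tendsto _ (nhdsWithin r (Set.Ici r)) _
          rw [← nhdsWithin_Icc_eq_nhdsGE (by linarith : r < r + 1)]
          exact h1
        exact continuousWithinAt_const.add h2
      refine hP.congr (fun r' hr' => detSol_eq_of_ge hr') (detSol_eq_of_ge le_rfl)
  · have hP : ContinuousAt (fun r' => x zeroPt + ∫ σ in τ..r', ϑ σ) r := by
      have h1 := (hprim (r + 1) (by linarith)) r (Set.mem_Icc.mpr ⟨hr.le, by linarith⟩)
      have h2 : ContinuousAt (fun r' => ∫ σ in τ..r', ϑ σ) r :=
        h1.continuousAt (Icc_mem_nhds hr (by linarith))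
      exact continuousAt_const.add h2
    refine ContinuousAt.congr hP ?_
    exact Filter.eventuallyEq_of_mem (isOpen_Ioi.mem_nhds hr)
      (fun r' (hr' : τ < r') => (detSol_eq_of_ge hr'.le).symm)

lemma detSol_atBot {τ : ℝ} {x : Pth d} {ϑ : ℝ → Eucl d} (hx : x ∈ C0 d) :
    Filter.Tendsto (detSol τ x ϑ) Filter.atBot (nhds 0) := by
  have hxb := hx.2
  have hmap : Filter.Tendsto (fun r : ℝ =>
      (⟨min (r - τ) 0, Set.mem_Iic.mpr (min_le_right _ _)⟩ : PathDom)) Filter.atBot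
      Filter.atBot := by
    refine Filter.tendsto_atBot.mpr (fun b => ?_)
    refine (Filter.eventually_le_atBot (τ + b.1)).mono (fun r hr => ?_)
    show min (r - τ) 0 ≤ b.1
    exact le_trans (min_le_left _ _) (by linarith)
  refine (hxb.comp hmap).congr' ?_
  refine (Filter.eventually_lt_atBot τ).mono (fun r hr => ?_)
  show x _ = detSol τ x ϑ r
  rw [show detSol τ x ϑ r = x ⟨r - τ, Set.mem_Iic.mpr (by linarith)⟩ from dif_pos hr]
  exact congrArg x (Subtype.ext (min_eq_left (by linarith : r - τ ≤ 0)))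

/-- Uniform continuity on `(-∞, s]` for a continuous path vanishing at `-∞`. -/
lemma unif_cont_Iic {X : ℝ → Eucl d} (hXc : Continuous X)
    (hX0 : Filter.Tendsto X Filter.atBot (nhds 0)) (s : ℝ) :
    ∀ ε > (0:ℝ), ∃ ρ > (0:ℝ), ∀ a b : ℝ, a ≤ s → b ≤ s → |a - b| ≤ ρ → ‖X a - X b‖ ≤ ε := by
  intro ε hε
  obtain ⟨A, hA⟩ : ∃ A : ℝ, ∀ r ≤ A, ‖X r‖ ≤ ε/2 := by
    have := (hX0.eventually (Metric.ball_mem_nhds (0 : Eucl d) (by positivity : 0 < ε/2)))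
    rw [Filter.eventually_atBot] at this
    obtain ⟨A, hA⟩ := this
    exact ⟨A, fun r hr => by
      have h := hA r hr
      replace h : dist (X r) 0 < ε/2 := h
      rw [dist_zero_right] at h
      exact h.le⟩
  have hucK := (isCompact_Icc (a := A - 1) (b := s)).uniformContinuousOn_of_continuous
    hXc.continuousOn
  rw [Metric.uniformContinuousOn_iff] at hucK
  obtain ⟨δ, hδ, hδ'⟩ := hucK ε hε
  refine ⟨min (δ/2) 1, by positivity, fun a b ha hb hab => ?_⟩
  have hab2 : |a - b| ≤ 1 := le_trans hab (min_le_right _ _)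
  by_cases hcase : a ≤ A ∧ b ≤ A
  · calc ‖X a - X b‖ ≤ ‖X a‖ + ‖X b‖ := norm_sub_le _ _
      _ ≤ ε/2 + ε/2 := add_le_add (hA a hcase.1) (hA b hcase.2)
      _ = ε := by ring
  · push_neg at hcase
    have hmem : a ∈ Set.Icc (A - 1) s ∧ b ∈ Set.Icc (A - 1) s := by
      rcases le_or_gt a A with h | h
      · have hbA := hcase h
        constructor
        · refine ⟨?_, ha⟩
          have : b - a ≤ 1 := by rw [abs_le] at hab2; linarith [hab2.1]
          linarith
        · exact ⟨by linarith, hb⟩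
      · constructor
        · exact ⟨by linarith, ha⟩
        · refine ⟨?_, hb⟩
          have : a - b ≤ 1 := by rw [abs_le] at hab2; linarith [hab2.2]
          linarith
    have := hδ' a hmem.1 b hmem.2 (by
      rw [Real.dist_eq]
      exact lt_of_le_of_lt (le_trans hab (min_le_left _ _)) (by linarith))
    rw [dist_eq_norm] at this
    exact this.le

/-! ### `d_∞`-distance to points on the solution curve -/

lemma dInfty_le_close {X : ℝ → Eucl d} {s σ₀ u : ℝ} {y : Pth d} {εB ρ' : ℝ}
    (hσs : σ₀ ≤ s) (hus : u ≤ s)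
    (hub : ∀ a b : ℝ, a ≤ s → b ≤ s → |a - b| ≤ |u - σ₀| → ‖X a - X b‖ ≤ εB)
    (hy : ∀ θ : PathDom, ‖y θ - X (u + θ.1)‖ ≤ ρ') :
    dInfty (σ₀, histAt X σ₀) (u, y) ≤ |u - σ₀| + (εB + ρ') := by
  unfold dInfty
  split_ifs with hcase
  · -- σ₀ ≤ u
    show |u - σ₀| + normC (shift (histAt X σ₀) (u - σ₀) - y) ≤ |u - σ₀| + (εB + ρ')
    have hσu : σ₀ ≤ u := hcase
    have habs : |u - σ₀| = u - σ₀ := abs_of_nonneg (by linarith)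
    have hnc : normC (shift (histAt X σ₀) (u - σ₀) - y) ≤ εB + ρ' := by
      apply normC_le
      intro θ
      rw [shift_eq (by linarith : (0:ℝ) ≤ u - σ₀)]
      have hθ : θ.1 ≤ 0 := Set.mem_Iic.mp θ.2
      show ‖histAt X σ₀ ⟨min (θ.1 + (u - σ₀)) 0, _⟩ - y θ‖ ≤ εB + ρ'
      have hval : histAt X σ₀ ⟨min (θ.1 + (u - σ₀)) 0, Set.mem_Iic.mpr (min_le_right _ _)⟩
          = X (σ₀ + min (θ.1 + (u - σ₀)) 0) := rfl
      rw [hval]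
      have h1 : ‖X (σ₀ + min (θ.1 + (u - σ₀)) 0) - X (u + θ.1)‖ ≤ εB := by
        apply hub
        · have : min (θ.1 + (u - σ₀)) 0 ≤ 0 := min_le_right _ _
          linarith
        · linarith
        · rcases le_or_gt (θ.1 + (u - σ₀)) 0 with h | h
          · rw [min_eq_left h]
            have : σ₀ + (θ.1 + (u - σ₀)) = u + θ.1 := by ring
            rw [this, sub_self, abs_zero]
            exact abs_nonneg _
          · rw [min_eq_right h.le, add_zero, habs]
            rw [abs_le]
            constructor <;> [skip; linarith]
            have : -(u - σ₀) ≤ 0 := by linarith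
            linarith
      have h2 : ‖X (u + θ.1) - y θ‖ ≤ ρ' := by
        rw [norm_sub_rev]; exact hy θ
      calc ‖X (σ₀ + min (θ.1 + (u - σ₀)) 0) - y θ‖
          ≤ ‖X (σ₀ + min (θ.1 + (u - σ₀)) 0) - X (u + θ.1)‖ + ‖X (u + θ.1) - y θ‖ := by
            have := norm_sub_le_norm_sub_add_norm_sub
              (X (σ₀ + min (θ.1 + (u - σ₀)) 0)) (X (u + θ.1)) (y θ)
            exact this
        _ ≤ εB + ρ' := add_le_add h1 h2
    exact add_le_add_right hnc _
  · -- u < σ₀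
    show |σ₀ - u| + normC (shift y (σ₀ - u) - histAt X σ₀) ≤ |u - σ₀| + (εB + ρ')
    push_neg at hcase
    have hσu : u ≤ σ₀ := hcase.le
    have habs : |σ₀ - u| = |u - σ₀| := abs_sub_comm _ _
    have hnc : normC (shift y (σ₀ - u) - histAt X σ₀) ≤ εB + ρ' := by
      apply normC_le
      intro θ
      rw [shift_eq (by linarith : (0:ℝ) ≤ σ₀ - u)]
      have hθ : θ.1 ≤ 0 := Set.mem_Iic.mp θ.2
      show ‖y ⟨min (θ.1 + (σ₀ - u)) 0, _⟩ - histAt X σ₀ θ‖ ≤ εB + ρ'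
      have hXval : histAt X σ₀ θ = X (σ₀ + θ.1) := rfl
      rw [hXval]
      set θ' : PathDom := ⟨min (θ.1 + (σ₀ - u)) 0, Set.mem_Iic.mpr (min_le_right _ _)⟩ with hθ'
      have h1 : ‖y θ' - X (u + θ'.1)‖ ≤ ρ' := hy θ'
      have h2 : ‖X (u + θ'.1) - X (σ₀ + θ.1)‖ ≤ εB := by
        apply hub
        · have : θ'.1 ≤ 0 := Set.mem_Iic.mp θ'.2
          linarith
        · linarith
        · show |u + min (θ.1 + (σ₀ - u)) 0 - (σ₀ + θ.1)| ≤ |u - σ₀|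
          rcases le_or_gt (θ.1 + (σ₀ - u)) 0 with h | h
          · rw [min_eq_left h]
            have : u + (θ.1 + (σ₀ - u)) - (σ₀ + θ.1) = 0 := by ring
            rw [this, abs_zero]
            exact abs_nonneg _
          · rw [min_eq_right h.le, add_zero]
            have hA : |u - σ₀| = σ₀ - u := by
              rw [abs_sub_comm]; exact abs_of_nonneg (by linarith)
            rw [hA, abs_le]
            constructor <;> linarith
      calc ‖y θ' - X (σ₀ + θ.1)‖
          ≤ ‖y θ' - X (u + θ'.1)‖ + ‖X (u + θ'.1) - X (σ₀ + θ.1)‖ :=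
            norm_sub_le_norm_sub_add_norm_sub _ _ _
        _ ≤ ρ' + εB := add_le_add h1 h2
        _ = εB + ρ' := by ring
    rw [habs]
    exact add_le_add_right hnc _


lemma approx_shift_close {X : ℝ → Eucl d} {tb δ s ε : ℝ} (hδ : 0 < δ) {k : ℕ} {r : ℝ}
    (hr0 : 0 ≤ r) (hrδ : r ≤ δ) (hks : tb + k * δ + r ≤ s)
    (UC : ∀ a b : ℝ, a ≤ s → b ≤ s → |a - b| ≤ 2*δ → ‖X a - X b‖ ≤ ε)
    (θ : PathDom) :
    ‖shift (approxPath X tb δ k) r θ - X (tb + k * δ + r + θ.1)‖ ≤ ε := by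
  rw [shift_eq hr0]
  show ‖approxPath X tb δ k ⟨min (θ.1 + r) 0, Set.mem_Iic.mpr (min_le_right _ _)⟩
    - X (tb + k * δ + r + θ.1)‖ ≤ ε
  rw [approxPath_apply hδ]
  show ‖X (clampT tb δ (tb + k * δ + min (θ.1 + r) 0)) - X (tb + k * δ + r + θ.1)‖ ≤ ε
  have hθ : θ.1 ≤ 0 := Set.mem_Iic.mp θ.2
  set arg := tb + k * δ + min (θ.1 + r) 0 with harg
  have h1 : clampT tb δ arg ≤ arg := clampT_le hδ
  have h2 : arg - clampT tb δ arg ≤ δ := clampT_gap hδ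
  have h3 : arg ≤ tb + k * δ + r + θ.1 ∧ tb + k * δ + r + θ.1 - arg ≤ r := by
    rcases le_or_gt (θ.1 + r) 0 with h | h
    · rw [harg, min_eq_left h]
      constructor <;> [linarith; linarith]
    · rw [harg, min_eq_right h.le]
      constructor <;> [linarith; linarith]
  apply UC
  · have : min (θ.1 + r) 0 ≤ 0 := min_le_right _ _
    linarith
  · linarith
  · rw [abs_le]
    constructor <;> linarith

lemma uniformU1 {tGl : ℝ} {ft : ℝ × Pth d → ℝ} {fx : ℝ × Pth d → Eucl d}
    (hcft : DContinuousOn ft (LamHat d tGl)) (hcfx : DContinuousOn fx (LamHat d tGl))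
    {X : ℝ → Eucl d} {tb s : ℝ}
    (hmemX : ∀ σ ∈ Set.Icc tb s, (σ, histAt X σ) ∈ LamHat d tGl)
    (hUC : ∀ ε > (0:ℝ), ∃ ρ > (0:ℝ), ∀ a b : ℝ, a ≤ s → b ≤ s → |a - b| ≤ ρ → ‖X a - X b‖ ≤ ε)
    {σ₀ : ℝ} (hσ₀ : σ₀ ∈ Set.Icc tb s) {ε : ℝ} (hε : 0 < ε) :
    ∃ ρ₀ > (0:ℝ), ∀ u ∈ Set.Icc tb s, ∀ y : Pth d, (u, y) ∈ LamHat d tGl →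
      |u - σ₀| ≤ 2 * ρ₀ → (∀ θ : PathDom, ‖y θ - X (u + θ.1)‖ ≤ ρ₀) →
      |ft (u, y) - ft (σ₀, histAt X σ₀)| ≤ ε ∧ ‖fx (u, y) - fx (σ₀, histAt X σ₀)‖ ≤ ε := by
  obtain ⟨δ1, hδ1, h1⟩ := hcft _ (hmemX σ₀ hσ₀) ε hε
  obtain ⟨δ2, hδ2, h2⟩ := hcfx _ (hmemX σ₀ hσ₀) ε hε
  set δm := min δ1 δ2 with hδm
  have hδmpos : 0 < δm := lt_min hδ1 hδ2
  obtain ⟨ρX, hρX, hXc⟩ := hUC (δm/4) (by positivity)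
  refine ⟨min (δm/8) (ρX/2), by positivity, fun u hu y hyL hud hyc => ?_⟩
  set ρ₀ := min (δm/8) (ρX/2) with hρ₀
  have hρ₀1 : ρ₀ ≤ δm/8 := min_le_left _ _
  have hρ₀2 : ρ₀ ≤ ρX/2 := min_le_right _ _
  have hdb : dInfty (σ₀, histAt X σ₀) (u, y) ≤ |u - σ₀| + (δm/4 + ρ₀) := by
    apply dInfty_le_close hσ₀.2 hu.2 ?_ hyc
    intro a b ha hb hab
    exact hXc a b ha hb (le_trans hab (by linarith))
  have hdlt : dInfty (σ₀, histAt X σ₀) (u, y) < δm := by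
    have : |u - σ₀| ≤ 2 * ρ₀ := hud
    calc dInfty (σ₀, histAt X σ₀) (u, y) ≤ |u - σ₀| + (δm/4 + ρ₀) := hdb
      _ ≤ 2 * ρ₀ + (δm/4 + ρ₀) := by linarith
      _ ≤ 2 * (δm/8) + (δm/4 + δm/8) := by linarith
      _ < δm := by linarith
  constructor
  · have := h1 (u, y) hyL (lt_of_lt_of_le hdlt (min_le_left _ _))
    rw [Real.norm_eq_abs] at this
    exact this.le
  · exact (h2 (u, y) hyL (lt_of_lt_of_le hdlt (min_le_right _ _))).le

lemma uniformU {tGl : ℝ} {ft : ℝ × Pth d → ℝ} {fx : ℝ × Pth d → Eucl d}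
    (hcft : DContinuousOn ft (LamHat d tGl)) (hcfx : DContinuousOn fx (LamHat d tGl))
    {X : ℝ → Eucl d} {tb s : ℝ} (htbs : tb ≤ s)
    (hmemX : ∀ σ ∈ Set.Icc tb s, (σ, histAt X σ) ∈ LamHat d tGl)
    (hUC : ∀ ε > (0:ℝ), ∃ ρ > (0:ℝ), ∀ a b : ℝ, a ≤ s → b ≤ s → |a - b| ≤ ρ → ‖X a - X b‖ ≤ ε)
    {ε : ℝ} (hε : 0 < ε) :
    ∃ ρ > (0:ℝ), ∀ σ ∈ Set.Icc tb s, ∀ u ∈ Set.Icc tb s, ∀ y : Pth d,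
      (u, y) ∈ LamHat d tGl →
      |u - σ| ≤ ρ → (∀ θ : PathDom, ‖y θ - X (u + θ.1)‖ ≤ ρ) →
      |ft (u, y) - ft (σ, histAt X σ)| ≤ ε ∧ ‖fx (u, y) - fx (σ, histAt X σ)‖ ≤ ε := by
  have hhalf : (0:ℝ) < ε/2 := by positivity
  have hch : ∀ σ₀ : ↥(Set.Icc tb s), ∃ ρ₀ > (0:ℝ),
      ∀ u ∈ Set.Icc tb s, ∀ y : Pth d, (u, y) ∈ LamHat d tGl →
      |u - (σ₀:ℝ)| ≤ 2 * ρ₀ → (∀ θ : PathDom, ‖y θ - X (u + θ.1)‖ ≤ ρ₀) →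
      |ft (u, y) - ft ((σ₀:ℝ), histAt X (σ₀:ℝ))| ≤ ε/2
        ∧ ‖fx (u, y) - fx ((σ₀:ℝ), histAt X (σ₀:ℝ))‖ ≤ ε/2 :=
    fun σ₀ => uniformU1 hcft hcfx hmemX hUC σ₀.2 hhalf
  choose ρ₀ hρ₀pos hρ₀ using hch
  have hcov : Set.Icc tb s ⊆ ⋃ σ₀ : ↥(Set.Icc tb s), Metric.ball (σ₀ : ℝ) (ρ₀ σ₀) := by
    intro σ hσ
    exact Set.mem_iUnion.mpr ⟨⟨σ, hσ⟩, by
      simp only [Metric.mem_ball, dist_self]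
      exact hρ₀pos ⟨σ, hσ⟩⟩
  obtain ⟨F, hF⟩ := isCompact_Icc.elim_finite_subcover
    (fun σ₀ : ↥(Set.Icc tb s) => Metric.ball (σ₀ : ℝ) (ρ₀ σ₀))
    (fun σ₀ => Metric.isOpen_ball) hcov
  have htbmem : tb ∈ Set.Icc tb s := Set.mem_Icc.mpr ⟨le_rfl, htbs⟩
  have hFne : F.Nonempty := by
    obtain ⟨i, hiF, _⟩ := Set.mem_iUnion₂.mp (hF htbmem)
    exact ⟨i, hiF⟩
  set ρ := F.inf' hFne ρ₀ with hρ
  have hρpos : 0 < ρ := (Finset.lt_inf'_iff hFne).mpr (fun i _ => hρ₀pos i)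
  refine ⟨ρ, hρpos, fun σ hσ u hu y hyL hud hyc => ?_⟩
  obtain ⟨i, hiF, hσball⟩ := Set.mem_iUnion₂.mp (hF hσ)
  have hρi : ρ ≤ ρ₀ i := Finset.inf'_le _ hiF
  have hσi : |σ - (i:ℝ)| ≤ ρ₀ i := by
    rw [Metric.mem_ball, Real.dist_eq] at hσball
    exact hσball.le
  have big1 := hρ₀ i u hu y hyL
    (by
      have : |u - (i:ℝ)| ≤ |u - σ| + |σ - (i:ℝ)| := abs_sub_le _ _ _
      linarith)
    (fun θ => le_trans (hyc θ) hρi)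
  have big2 := hρ₀ i σ hσ (histAt X σ) (hmemX σ hσ)
    (by linarith)
    (fun θ => by
      show ‖X (σ + θ.1) - X (σ + θ.1)‖ ≤ ρ₀ i
      rw [sub_self, norm_zero]
      exact (hρ₀pos i).le)
  constructor
  · have htri := abs_sub_le (ft (u, y)) (ft ((i:ℝ), histAt X (i:ℝ))) (ft (σ, histAt X σ))
    have h2' : |ft ((i:ℝ), histAt X (i:ℝ)) - ft (σ, histAt X σ)| ≤ ε/2 := by
      rw [abs_sub_comm]; exact big2.1
    linarith [big1.1]
  · have htri := dist_triangle (fx (u, y)) (fx ((i:ℝ), histAt X (i:ℝ))) (fx (σ, histAt X σ))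
    rw [dist_eq_norm, dist_eq_norm, dist_eq_norm] at htri
    have h2' : ‖fx ((i:ℝ), histAt X (i:ℝ)) - fx (σ, histAt X σ)‖ ≤ ε/2 := by
      rw [norm_sub_rev]; exact big2.2
    linarith [big1.2]

lemma curve_continuousOn {E : Type*} [NormedAddCommGroup E] {tGl : ℝ} {F : ℝ × Pth d → E}
    (hF : DContinuousOn F (LamHat d tGl)) {X : ℝ → Eucl d} {tb s : ℝ}
    (hmemX : ∀ σ ∈ Set.Icc tb s, (σ, histAt X σ) ∈ LamHat d tGl)
    (hUC : ∀ ε > (0:ℝ), ∃ ρ > (0:ℝ), ∀ a b : ℝ, a ≤ s → b ≤ s → |a - b| ≤ ρ → ‖X a - X b‖ ≤ ε) :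
    ContinuousOn (fun σ => F (σ, histAt X σ)) (Set.Icc tb s) := by
  intro σ hσ
  rw [Metric.continuousWithinAt_iff]
  intro ε hε
  obtain ⟨δ, hδ, hδ'⟩ := hF _ (hmemX σ hσ) ε hε
  obtain ⟨ρX, hρX, hXc⟩ := hUC (δ/4) (by positivity)
  refine ⟨min (δ/4) ρX, by positivity, fun σ' hσ' hdist => ?_⟩
  rw [dist_eq_norm]
  apply hδ' _ (hmemX σ' hσ')
  have hdd : |σ' - σ| ≤ min (δ/4) ρX := by
    rw [Real.dist_eq] at hdist
    exact hdist.le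
  have hdb : dInfty (σ, histAt X σ) (σ', histAt X σ') ≤ |σ' - σ| + (δ/4 + δ/4) := by
    apply dInfty_le_close hσ.2 hσ'.2 ?_ (fun θ => by
      show ‖X (σ' + θ.1) - X (σ' + θ.1)‖ ≤ δ/4
      rw [sub_self, norm_zero]; positivity)
    intro a b ha hb hab
    exact hXc a b ha hb (le_trans hab (le_trans hdd (min_le_right _ _)))
  have : |σ' - σ| ≤ δ/4 := le_trans hdd (min_le_left _ _)
  calc dInfty (σ, histAt X σ) (σ', histAt X σ') ≤ |σ' - σ| + (δ/4 + δ/4) := hdb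
    _ ≤ δ/4 + (δ/4 + δ/4) := by linarith
    _ < δ := by linarith


lemma integral_inner_const {a b : ℝ} (hab : a ≤ b) {g : ℝ → Eucl d}
    (hg : IntervalIntegrable g MeasureTheory.volume a b) (c : Eucl d) :
    (inner ℝ c (∫ σ in a..b, g σ) : ℝ) = ∫ σ in a..b, (inner ℝ c (g σ) : ℝ) := by
  rw [intervalIntegral.integral_of_le hab, intervalIntegral.integral_of_le hab]
  exact (integral_inner hg.1 c).symm

lemma eucl_inner_eq_sum (v w : Eucl d) : (inner ℝ v w : ℝ) = ∑ j : Fin d, v j * w j := by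
  rw [PiLp.inner_apply]
  refine Finset.sum_congr rfl (fun j _ => ?_)
  rw [RCLike.inner_apply]
  simp
  ring

end ChainRuleAux








set_option maxHeartbeats 4000000

/-- deterministic functional chain rule, Lemma 2.6 with
vanishing diffusion. -/
theorem deterministic_functional_ito {d : ℕ} (t : ℝ) (ht : 0 ≤ t)
    (f ft : ℝ × Pth d → ℝ) (fx : ℝ × Pth d → Eucl d)
    (fxx : ℝ × Pth d → Matrix (Fin d) (Fin d) ℝ)
    (hf : IsCp12Hat d t f ft fx fxx)
    (τ : ℝ) (hτ : 0 ≤ τ) (x : Pth d) (hx : x ∈ C0 d)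
    (ϑ : ℝ → Eucl d) (hϑ : ContinuousOn ϑ (Set.Ici τ)) :
    ∀ tb s : ℝ, max τ t ≤ tb → tb ≤ s →
      f (s, histAt (detSol τ x ϑ) s)
        = f (tb, histAt (detSol τ x ϑ) tb)
          + ∫ σ in tb..s,
              (ft (σ, histAt (detSol τ x ϑ) σ)
                + (inner ℝ (fx (σ, histAt (detSol τ x ϑ) σ)) (ϑ σ) : ℝ)) := by
  intro tb s htb hts
  have hXc : Continuous (detSol τ x ϑ) := detSol_continuous hx hϑ
  have hX0 : Filter.Tendsto (detSol τ x ϑ) Filter.atBot (nhds 0) := detSol_atBot hx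
  set X := detSol τ x ϑ with hXdef
  have hUC := unif_cont_Iic hXc hX0 s
  have hτtb : τ ≤ tb := le_trans (le_max_left _ _) htb
  have httb : t ≤ tb := le_trans (le_max_right _ _) htb
  have hmemX : ∀ σ ∈ Set.Icc tb s, (σ, histAt X σ) ∈ LamHat d t :=
    fun σ hσ => ⟨le_trans httb hσ.1, C0_subset_D0 (histAt_mem_C0 hXc hX0 σ)⟩
  rcases eq_or_lt_of_le hts with heq | htbs
  · subst heq; simp
  have hst : (0:ℝ) < s - tb := by linarith
  have hϑI : ContinuousOn ϑ (Set.Icc tb s) := hϑ.mono (fun σ hσ => le_trans hτtb hσ.1)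
  have hftcurve : ContinuousOn (fun σ => ft (σ, histAt X σ)) (Set.Icc tb s) :=
    curve_continuousOn hf.cont_t hmemX hUC
  have hfxcurve : ContinuousOn (fun σ => fx (σ, histAt X σ)) (Set.Icc tb s) :=
    curve_continuousOn hf.cont_x hmemX hUC
  have hinncurve : ContinuousOn (fun σ => (inner ℝ (fx (σ, histAt X σ)) (ϑ σ) : ℝ))
      (Set.Icc tb s) := hfxcurve.inner hϑI
  obtain ⟨M0, hM0⟩ := isCompact_Icc.exists_bound_of_continuousOn hϑI
  set Mϑ := max M0 0 with hMθdef
  have hMϑ0 : 0 ≤ Mϑ := le_max_right _ _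
  have hMϑ : ∀ σ ∈ Set.Icc tb s, ‖ϑ σ‖ ≤ Mϑ := fun σ hσ => le_trans (hM0 σ hσ) (le_max_left _ _)
  set G := fun σ => ft (σ, histAt X σ) + (inner ℝ (fx (σ, histAt X σ)) (ϑ σ) : ℝ) with hGdef
  have hGc : ContinuousOn G (Set.Icc tb s) := hftcurve.add hinncurve
  suffices habs : ∀ ε > (0:ℝ),
      |f (s, histAt X s) - f (tb, histAt X tb) - ∫ σ in tb..s, G σ| ≤ ε by
    have h0 : |f (s, histAt X s) - f (tb, histAt X tb) - ∫ σ in tb..s, G σ| ≤ 0 := by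
      by_contra hcon
      push_neg at hcon
      have := habs (|f (s, histAt X s) - f (tb, histAt X tb) - ∫ σ in tb..s, G σ|/2)
        (by linarith)
      linarith
    have h1 : f (s, histAt X s) - f (tb, histAt X tb) - ∫ σ in tb..s, G σ = 0 :=
      abs_eq_zero.mp (le_antisymm h0 (abs_nonneg _))
    linarith
  intro ε hε
  set C₀ := (s - tb) * (1 + Mϑ * (1 + (d:ℝ))) + 1 with hC₀def
  have hC₀pos : (0:ℝ) < C₀ := by
    have hd0 : (0:ℝ) ≤ (d:ℝ) := Nat.cast_nonneg d
    have h1 : (0:ℝ) < 1 + Mϑ * (1 + (d:ℝ)) := by nlinarith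
    have h2 : (0:ℝ) ≤ (s - tb) * (1 + Mϑ * (1 + (d:ℝ))) := by positivity
    rw [hC₀def]; linarith
  set ε₁ := ε / (2 * C₀) with hε₁def
  have hε₁pos : 0 < ε₁ := div_pos hε (by linarith)
  obtain ⟨ρ, hρpos, hU⟩ := uniformU hf.cont_t hf.cont_x hts hmemX hUC hε₁pos
  have hd2 : (0:ℝ) < (d:ℝ) + 2 := by positivity
  obtain ⟨ρ₂, hρ₂pos, hXc2⟩ := hUC (ρ/((d:ℝ)+2)) (by positivity)
  obtain ⟨δf, hδfpos, hδf'⟩ := hf.cont (s, histAt X s) (hmemX s ⟨hts, le_rfl⟩) (ε/2)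
    (by positivity)
  obtain ⟨ρ₃, hρ₃pos, hXc3⟩ := hUC (δf/4) (by positivity)
  set m := min ρ (min (ρ₂/2) ρ₃) with hmdef
  have hmpos : 0 < m := lt_min hρpos (lt_min (by linarith) hρ₃pos)
  obtain ⟨n, hn⟩ := exists_nat_gt ((s - tb)/m)
  have hnpos : 0 < n := by
    by_contra h
    push_neg at h
    have hn0 : n = 0 := by omega
    subst hn0
    have := div_pos hst hmpos
    simp only [Nat.cast_zero] at hn
    linarith
  have hnR : (0:ℝ) < n := by exact_mod_cast hnpos
  set δ := (s - tb)/n with hδdef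
  have hδpos : 0 < δ := div_pos hst hnR
  have hnδ : (n:ℝ) * δ = s - tb := by rw [hδdef]; field_simp
  have hδm : δ ≤ m := by
    rw [hδdef, div_le_iff₀ hnR]
    have h1 : s - tb < n * m := (div_lt_iff₀ hmpos).mp hn
    nlinarith
  have hδρ : δ ≤ ρ := le_trans hδm (min_le_left _ _)
  have hδρ₂ : 2*δ ≤ ρ₂ := by
    have := le_trans hδm (le_trans (min_le_right _ _) (min_le_left _ _))
    linarith
  have hδρ₃ : δ ≤ ρ₃ := le_trans hδm (le_trans (min_le_right _ _) (min_le_right _ _))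
  set T : ℕ → ℝ := fun k => tb + k * δ with hTdef
  have hT0 : T 0 = tb := by show tb + (0:ℕ) * δ = tb; norm_num
  have hTs : T n = s := by show tb + (n:ℝ) * δ = s; rw [hnδ]; ring
  have hTsucc : ∀ k : ℕ, T (k+1) = T k + δ := fun k => by
    show tb + ((k+1:ℕ):ℝ) * δ = tb + (k:ℝ) * δ + δ
    push_cast; ring
  have hTmem : ∀ k : ℕ, k ≤ n → T k ∈ Set.Icc tb s := by
    intro k hk
    have hk' : (k:ℝ) ≤ (n:ℝ) := by exact_mod_cast hk
    have hk0 : (0:ℝ) ≤ (k:ℝ) := Nat.cast_nonneg k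
    constructor
    · show tb ≤ tb + (k:ℝ) * δ
      nlinarith
    · show tb + (k:ℝ) * δ ≤ s
      nlinarith [hnδ]
  set P : ℕ → Pth d := approxPath X tb δ with hPdef
  set w : ℕ → Eucl d := fun k => X (T (k+1)) - X (T k) with hwdef
  have hPmem : ∀ k, P k ∈ D0 d :=
    approxPath_mem_D0 hδpos.le (C0_subset_D0 (histAt_mem_C0 hXc hX0 tb))
  have hPsucc : ∀ k : ℕ, P (k+1) = vpert (shift (P k) δ) (w k) := fun k => by
    simp only [hPdef, hwdef, hTdef]
    rfl
  have hstep : ∀ k : ℕ, k < n →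
      f (T (k+1), P (k+1)) - f (T k, P k)
        = (∫ r in (0:ℝ)..δ, ft (T k + r, shift (P k) r))
          + ∑ j : Fin d, ∫ a in (0:ℝ)..1,
              w k j * fx (T (k+1), vpert (shift (P k) δ)
                (stair (w k) (j:ℕ) + (a * w k j) • stdBasis d j)) j := by
    intro k hk
    have htT : t ≤ T k := le_trans httb (hTmem k hk.le).1
    have hH := ftcH hf.horiz hf.cont hf.cont_t htT (hPmem k) hδpos.le
    have hV := ftcV hf.vert hf.cont_x (le_trans httb (hTmem (k+1) hk).1)
      (shift_mem_D0 (hPmem k) hδpos.le) (w k)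
    have hTk : T k + δ = T (k+1) := (hTsucc k).symm
    rw [hTk] at hH
    rw [hPsucc k]
    linarith [hH, hV]
  have htel : f (T n, P n) - f (T 0, P 0)
      = ∑ k ∈ Finset.range n, (f (T (k+1), P (k+1)) - f (T k, P k)) :=
    (Finset.sum_range_sub (fun k => f (T k, P k)) n).symm
  have hGint : ∀ a b : ℕ, a ≤ n → b ≤ n →
      IntervalIntegrable G MeasureTheory.volume (T a) (T b) := by
    intro a b ha hb
    exact (hGc.mono (Set.uIcc_subset_Icc (hTmem a ha) (hTmem b hb))).intervalIntegrable
  have hsplit : ∫ σ in (T 0)..(T n), G σ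
      = ∑ k ∈ Finset.range n, ∫ σ in (T k)..(T (k+1)), G σ := by
    have key : ∀ m : ℕ, m ≤ n → ∫ σ in (T 0)..(T m), G σ
        = ∑ k ∈ Finset.range m, ∫ σ in (T k)..(T (k+1)), G σ := by
      intro m
      induction m with
      | zero => intro _; simp
      | succ m ih =>
        intro hm
        rw [Finset.sum_range_succ, ← ih (by omega),
          intervalIntegral.integral_add_adjacent_intervals (hGint 0 m (by omega) (by omega))
            (hGint m (m+1) (by omega) hm)]
    exact key n le_rfl
  have hεcle : ρ/((d:ℝ)+2) ≤ ρ := div_le_self hρpos.le (by linarith)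
  have hclose : ∀ k : ℕ, k < n → ∀ r : ℝ, 0 ≤ r → r ≤ δ → ∀ θ : PathDom,
      ‖shift (P k) r θ - X (T k + r + θ.1)‖ ≤ ρ/((d:ℝ)+2) := by
    intro k hk r hr0 hrδ θ
    have h2 : T (k+1) = T k + δ := hTsucc k
    have h3 : T k + δ ≤ s := by rw [← h2]; exact (hTmem (k+1) hk).2
    have h4 : T k = tb + (k:ℝ)*δ := rfl
    have hks : tb + (k:ℝ) * δ + r ≤ s := by rw [← h4]; linarith
    exact approx_shift_close hδpos hr0 hrδ hks
      (fun a b ha hb hab => hXc2 a b ha hb (le_trans hab hδρ₂)) θ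
  have hTk1s : ∀ k : ℕ, k < n → T (k+1) ∈ Set.Icc tb s := fun k hk => hTmem (k+1) hk
  have hEA : ∀ k : ℕ, k < n →
      |(∫ r in (0:ℝ)..δ, ft (T k + r, shift (P k) r))
        - ∫ σ in (T k)..(T (k+1)), ft (σ, histAt X σ)| ≤ ε₁ * δ := by
    intro k hk
    have htTk : t ≤ T k := le_trans httb (hTmem k hk.le).1
    have hmemk : ∀ r ∈ Set.uIcc (0:ℝ) δ, ((fun r => (T k + r, shift (P k) r)) r)
        ∈ LamHat d t := by
      intro r hr
      rw [Set.uIcc_of_le hδpos.le] at hr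
      exact ⟨show t ≤ T k + r by linarith [hr.1], shift_mem_D0 (hPmem k) hr.1⟩
    have hc1 : ContinuousOn (fun r => ft (T k + r, shift (P k) r)) (Set.uIcc 0 δ) := by
      apply continuousOn_comp_dC hf.cont_t hmemk (L := 1)
      intro r hr r' hr'
      rw [Set.uIcc_of_le hδpos.le] at hr hr'
      exact dInfty_horiz hr.1 hr'.1
    have hTkδs : T k + δ ≤ s := by rw [← hTsucc k]; exact (hTmem (k+1) hk).2
    have hc2 : ContinuousOn (fun r => ft (T k + r, histAt X (T k + r))) (Set.uIcc 0 δ) := by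
      apply hftcurve.comp ((continuous_const.add continuous_id).continuousOn)
      intro r hr
      rw [Set.uIcc_of_le hδpos.le] at hr
      have h1 := (hTmem k hk.le).1
      exact ⟨(by linarith [hr.1] : tb ≤ T k + r), (by linarith [hr.2] : T k + r ≤ s)⟩
    have hchg : ∫ σ in (T k)..(T (k+1)), ft (σ, histAt X σ)
        = ∫ r in (0:ℝ)..δ, ft (T k + r, histAt X (T k + r)) := by
      rw [intervalIntegral.integral_comp_add_left (fun σ => ft (σ, histAt X σ)) (T k),
        add_zero, ← hTsucc k]
    rw [hchg, ← intervalIntegral.integral_sub hc1.intervalIntegrable hc2.intervalIntegrable]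
    have hptbound : ∀ r ∈ Set.uIoc (0:ℝ) δ,
        ‖ft (T k + r, shift (P k) r) - ft (T k + r, histAt X (T k + r))‖ ≤ ε₁ := by
      intro r hr
      rw [Set.uIoc_of_le hδpos.le] at hr
      have humem : T k + r ∈ Set.Icc tb s :=
        ⟨by linarith [(hTmem k hk.le).1, hr.1], by linarith [hr.2]⟩
      have hyL : (T k + r, shift (P k) r) ∈ LamHat d t :=
        ⟨show t ≤ T k + r by linarith [hr.1], shift_mem_D0 (hPmem k) hr.1.le⟩
      have := hU (T k + r) humem (T k + r) humem (shift (P k) r) hyL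
        (by rw [sub_self, abs_zero]; exact hρpos.le)
        (fun θ => le_trans (hclose k hk r hr.1.le hr.2 θ) hεcle)
      rw [Real.norm_eq_abs]
      exact this.1
    have hb := intervalIntegral.norm_integral_le_of_norm_le_const hptbound
    rw [Real.norm_eq_abs] at hb
    calc |∫ r in (0:ℝ)..δ, (ft (T k + r, shift (P k) r) - ft (T k + r, histAt X (T k + r)))|
        ≤ ε₁ * |δ - 0| := hb
      _ = ε₁ * δ := by rw [sub_zero, abs_of_nonneg hδpos.le]
  -- facts about the increments w k
  have hwint : ∀ k : ℕ, k < n → w k = ∫ σ in (T k)..(T (k+1)), ϑ σ := by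
    intro k hk
    have h1 : τ ≤ T k := le_trans hτtb (hTmem k hk.le).1
    have h2 : τ ≤ T (k+1) := le_trans hτtb (hTmem (k+1) hk).1
    have hTle : T k ≤ T (k+1) := by rw [hTsucc k]; linarith
    have hI1 : IntervalIntegrable ϑ MeasureTheory.volume τ (T k) := by
      refine (hϑ.mono ?_).intervalIntegrable
      rw [Set.uIcc_of_le h1]
      exact fun σ hσ => hσ.1
    have hI2 : IntervalIntegrable ϑ MeasureTheory.volume (T k) (T (k+1)) := by
      refine (hϑ.mono ?_).intervalIntegrable
      rw [Set.uIcc_of_le hTle]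
      exact fun σ hσ => le_trans h1 hσ.1
    have hadd := intervalIntegral.integral_add_adjacent_intervals hI1 hI2
    show X (T (k+1)) - X (T k) = _
    rw [hXdef]
    rw [detSol_eq_of_ge h2, detSol_eq_of_ge h1, ← hadd]
    abel
  have hwnorm : ∀ k : ℕ, k < n → ‖w k‖ ≤ δ * Mϑ := by
    intro k hk
    rw [hwint k hk]
    have hb := intervalIntegral.norm_integral_le_of_norm_le_const (C := Mϑ)
      (f := ϑ) (a := T k) (b := T (k+1)) ?_
    · have hTd : T (k+1) - T k = δ := by rw [hTsucc k]; ring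
      rw [hTd, abs_of_nonneg hδpos.le] at hb
      linarith [hb]
    · intro σ hσ
      have hTle : T k ≤ T (k+1) := by rw [hTsucc k]; linarith
      rw [Set.uIoc_of_le hTle] at hσ
      exact hMϑ σ ⟨le_trans (hTmem k hk.le).1 hσ.1.le, le_trans hσ.2 (hTmem (k+1) hk).2⟩
  have hwsmall : ∀ k : ℕ, k < n → ‖w k‖ ≤ ρ/((d:ℝ)+2) := by
    intro k hk
    apply hXc2 (T (k+1)) (T k) (hTmem (k+1) hk).2 (hTmem k hk.le).2
    rw [hTsucc k]
    rw [show T k + δ - T k = δ by ring, abs_of_nonneg hδpos.le]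
    linarith
  have hv'bound : ∀ k : ℕ, k < n → ∀ (j : Fin d) (a : ℝ), |a| ≤ 1 →
      ‖stair (w k) (j:ℕ) + (a * w k j) • stdBasis d j‖ ≤ ((d:ℝ)+1) * (ρ/((d:ℝ)+2)) := by
    intro k hk j a ha
    have h1 : ‖stair (w k) (j:ℕ)‖ ≤ (d:ℝ) * ‖w k‖ := norm_stair_le _ _
    have h2 : ‖(a * w k j) • stdBasis d j‖ ≤ ‖w k‖ := by
      rw [norm_smul]
      simp only [stdBasis, EuclideanSpace.norm_single, norm_one, mul_one, Real.norm_eq_abs]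
      rw [abs_mul]
      calc |a| * |w k j| ≤ 1 * ‖w k‖ :=
            mul_le_mul ha (abs_coord_le_norm _ _) (abs_nonneg _) zero_le_one
        _ = ‖w k‖ := one_mul _
    have h3 := hwsmall k hk
    calc ‖stair (w k) (j:ℕ) + (a * w k j) • stdBasis d j‖
        ≤ ‖stair (w k) (j:ℕ)‖ + ‖(a * w k j) • stdBasis d j‖ := norm_add_le _ _
      _ ≤ (d:ℝ) * ‖w k‖ + ‖w k‖ := add_le_add h1 h2
      _ = ((d:ℝ)+1) * ‖w k‖ := by ring
      _ ≤ ((d:ℝ)+1) * (ρ/((d:ℝ)+2)) := by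
          apply mul_le_mul_of_nonneg_left h3
          positivity
  have hQclose : ∀ k : ℕ, k < n → ∀ (v' : Eucl d),
      ‖v'‖ ≤ ((d:ℝ)+1) * (ρ/((d:ℝ)+2)) →
      ∀ θ : PathDom, ‖vpert (shift (P k) δ) v' θ - X (T (k+1) + θ.1)‖ ≤ ρ := by
    intro k hk v' hv' θ
    by_cases hθ0 : θ.1 = 0
    · have hθ : θ = zeroPt := Subtype.ext hθ0
      subst hθ
      rw [vpert_apply_zeroPt, shift_apply_zeroPt hδpos.le]
      have hP0 : P k zeroPt = X (T k) := by
        show approxPath X tb δ k zeroPt = X (T k)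
        rw [approxPath_apply hδpos k zeroPt]
        refine congrArg X ?_
        show clampT tb δ (tb + (k:ℝ) * δ + 0) = T k
        rw [add_zero, clampT_grid hδpos]
      rw [hP0]
      have e : T (k+1) + (zeroPt : PathDom).1 = T (k+1) := add_zero _
      rw [e]
      have hXd : ‖X (T k) - X (T (k+1))‖ ≤ ρ/((d:ℝ)+2) := by
        apply hXc2 (T k) (T (k+1)) (hTmem k hk.le).2 (hTmem (k+1) hk).2
        rw [hTsucc k, show T k - (T k + δ) = -δ by ring, abs_neg, abs_of_nonneg hδpos.le]
        linarith
      calc ‖X (T k) + v' - X (T (k+1))‖ ≤ ‖X (T k) - X (T (k+1))‖ + ‖v'‖ := by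
            have he : X (T k) + v' - X (T (k+1)) = (X (T k) - X (T (k+1))) + v' := by abel
            rw [he]; exact norm_add_le _ _
        _ ≤ ρ/((d:ℝ)+2) + ((d:ℝ)+1) * (ρ/((d:ℝ)+2)) := add_le_add hXd hv'
        _ = ρ := by field_simp; ring
    · rw [vpert_apply_ne _ _ hθ0]
      have hcl := hclose k hk δ hδpos.le le_rfl θ
      rw [hTsucc k]
      exact le_trans hcl hεcle
  have hEB : ∀ k : ℕ, k < n →
      |(∑ j : Fin d, ∫ a in (0:ℝ)..1,
          w k j * fx (T (k+1), vpert (shift (P k) δ)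
            (stair (w k) (j:ℕ) + (a * w k j) • stdBasis d j)) j)
        - ∫ σ in (T k)..(T (k+1)), (inner ℝ (fx (σ, histAt X σ)) (ϑ σ) : ℝ)|
      ≤ ε₁ * ((d:ℝ) * (δ * Mϑ)) + ε₁ * Mϑ * δ := by
    intro k hk
    have hTle : T k ≤ T (k+1) := by rw [hTsucc k]; linarith
    have htT1 : t ≤ T (k+1) := le_trans httb (hTmem (k+1) hk).1
    set Fk : Eucl d := fx (T (k+1), histAt X (T (k+1))) with hFkdef
    -- continuity of per-j integrands
    have hQcont : ∀ (j : Fin d), ContinuousOn (fun a => w k j * fx (T (k+1),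
        vpert (shift (P k) δ) (stair (w k) (j:ℕ) + (a * w k j) • stdBasis d j)) j)
        (Set.uIcc 0 1) := by
      intro j
      have hfxc2 : ContinuousOn (fun a => fx (T (k+1),
          vpert (shift (P k) δ) (stair (w k) (j:ℕ) + (a * w k j) • stdBasis d j)))
          (Set.uIcc 0 1) := by
        apply continuousOn_comp_dC hf.cont_x (L := |w k j|)
        · intro a _
          exact ⟨htT1, vpert_mem_D0 (shift_mem_D0 (hPmem k) hδpos.le) _⟩
        · intro a _ b _
          rw [dInfty_eq_time]
          refine le_trans (normC_vpert_sub_vpert _ _ _) ?_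
          have hvec : stair (w k) (j:ℕ) + (a * w k j) • stdBasis d j
              - (stair (w k) (j:ℕ) + (b * w k j) • stdBasis d j)
              = ((a - b) * w k j) • stdBasis d j := by
            rw [add_sub_add_left_eq_sub, ← sub_smul]; congr 1; ring
          rw [hvec, norm_smul]
          simp only [stdBasis, EuclideanSpace.norm_single, norm_one, mul_one, Real.norm_eq_abs]
          rw [abs_mul, abs_sub_comm]
          exact le_of_eq (mul_comm _ _)
      exact continuousOn_const.mul ((PiLp.continuous_apply 2 _ j).comp_continuousOn hfxc2)
    have hjint : ∀ j : Fin d,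
        |(∫ a in (0:ℝ)..1, w k j * fx (T (k+1), vpert (shift (P k) δ)
            (stair (w k) (j:ℕ) + (a * w k j) • stdBasis d j)) j) - Fk j * w k j|
          ≤ (δ * Mϑ) * ε₁ := by
      intro j
      have hconst : (∫ _a in (0:ℝ)..1, w k j * Fk j) = w k j * Fk j := by simp
      rw [mul_comm (Fk j) (w k j), ← hconst,
        ← intervalIntegral.integral_sub (hQcont j).intervalIntegrable
          intervalIntegrable_const]
      have hpt : ∀ a ∈ Set.uIoc (0:ℝ) 1,
          ‖w k j * fx (T (k+1), vpert (shift (P k) δ)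
            (stair (w k) (j:ℕ) + (a * w k j) • stdBasis d j)) j - w k j * Fk j‖
            ≤ ‖w k‖ * ε₁ := by
        intro a ha
        rw [Set.uIoc_of_le zero_le_one] at ha
        have haa : |a| ≤ 1 := abs_le.mpr ⟨by linarith [ha.1], ha.2⟩
        have hvb := hv'bound k hk j a haa
        have hy := hQclose k hk _ hvb
        have hmemQ : (T (k+1), vpert (shift (P k) δ)
            (stair (w k) (j:ℕ) + (a * w k j) • stdBasis d j)) ∈ LamHat d t :=
          ⟨htT1, vpert_mem_D0 (shift_mem_D0 (hPmem k) hδpos.le) _⟩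
        have hUres := hU (T (k+1)) (hTmem (k+1) hk) (T (k+1)) (hTmem (k+1) hk) _ hmemQ
          (by rw [sub_self, abs_zero]; exact hρpos.le) hy
        have hcoord : |fx (T (k+1), vpert (shift (P k) δ)
            (stair (w k) (j:ℕ) + (a * w k j) • stdBasis d j)) j - Fk j| ≤ ε₁ := by
          have h5 := abs_coord_le_norm (fx (T (k+1), vpert (shift (P k) δ)
            (stair (w k) (j:ℕ) + (a * w k j) • stdBasis d j)) - Fk) j
          simp only [PiLp.sub_apply] at h5
          exact le_trans h5 hUres.2
        rw [Real.norm_eq_abs, ← mul_sub, abs_mul]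
        have h6 : |w k j| ≤ ‖w k‖ := abs_coord_le_norm _ _
        exact mul_le_mul h6 hcoord (abs_nonneg _) (norm_nonneg _)
      have hb := intervalIntegral.norm_integral_le_of_norm_le_const hpt
      rw [Real.norm_eq_abs] at hb
      have h7 : ‖w k‖ * ε₁ * |1 - (0:ℝ)| = ‖w k‖ * ε₁ := by norm_num
      rw [h7] at hb
      exact le_trans hb (mul_le_mul_of_nonneg_right (hwnorm k hk) hε₁pos.le)
    have hpart1 : |(∑ j : Fin d, ∫ a in (0:ℝ)..1, w k j * fx (T (k+1),
        vpert (shift (P k) δ) (stair (w k) (j:ℕ) + (a * w k j) • stdBasis d j)) j)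
        - (inner ℝ Fk (w k) : ℝ)| ≤ ε₁ * ((d:ℝ) * (δ * Mϑ)) := by
      rw [eucl_inner_eq_sum, ← Finset.sum_sub_distrib]
      refine le_trans (Finset.abs_sum_le_sum_abs _ _) ?_
      calc ∑ j : Fin d, |(∫ a in (0:ℝ)..1, w k j * fx (T (k+1), vpert (shift (P k) δ)
            (stair (w k) (j:ℕ) + (a * w k j) • stdBasis d j)) j) - Fk j * w k j|
          ≤ ∑ _j : Fin d, (δ * Mϑ) * ε₁ := Finset.sum_le_sum (fun j _ => hjint j)
        _ = (d:ℝ) * ((δ * Mϑ) * ε₁) := by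
            rw [Finset.sum_const, Finset.card_univ, Fintype.card_fin, nsmul_eq_mul]
        _ = ε₁ * ((d:ℝ) * (δ * Mϑ)) := by ring
    have hϑintk : IntervalIntegrable ϑ MeasureTheory.volume (T k) (T (k+1)) :=
      (hϑI.mono (Set.uIcc_subset_Icc (hTmem k hk.le) (hTmem (k+1) hk))).intervalIntegrable
    have hFkdiff : ∀ σ ∈ Set.uIoc (T k) (T (k+1)),
        ‖Fk - fx (σ, histAt X σ)‖ ≤ ε₁ := by
      intro σ hσ
      rw [Set.uIoc_of_le hTle] at hσ
      have hσmem : σ ∈ Set.Icc tb s :=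
        ⟨le_trans (hTmem k hk.le).1 hσ.1.le, le_trans hσ.2 (hTmem (k+1) hk).2⟩
      have h1 := hU σ hσmem (T (k+1)) (hTmem (k+1) hk) (histAt X (T (k+1)))
        (hmemX _ (hTmem (k+1) hk))
        (by
          have hd1 : T (k+1) - σ ≤ δ := by rw [hTsucc k]; linarith [hσ.1]
          have hd0 : 0 ≤ T (k+1) - σ := by linarith [hσ.2]
          rw [abs_of_nonneg hd0]
          linarith)
        (fun θ => by
          show ‖X (T (k+1) + θ.1) - X (T (k+1) + θ.1)‖ ≤ ρ
          rw [sub_self, norm_zero]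
          exact hρpos.le)
      exact h1.2
    have hpart2 : |(inner ℝ Fk (w k) : ℝ)
        - ∫ σ in (T k)..(T (k+1)), (inner ℝ (fx (σ, histAt X σ)) (ϑ σ) : ℝ)|
        ≤ ε₁ * Mϑ * δ := by
      have h1 : (inner ℝ Fk (w k) : ℝ)
          = ∫ σ in (T k)..(T (k+1)), (inner ℝ Fk (ϑ σ) : ℝ) := by
        rw [hwint k hk]
        exact integral_inner_const hTle hϑintk Fk
      have hint1 : IntervalIntegrable (fun σ => (inner ℝ Fk (ϑ σ) : ℝ))
          MeasureTheory.volume (T k) (T (k+1)) :=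
        ((continuousOn_const.inner hϑI).mono
          (Set.uIcc_subset_Icc (hTmem k hk.le) (hTmem (k+1) hk))).intervalIntegrable
      have hint2 : IntervalIntegrable (fun σ => (inner ℝ (fx (σ, histAt X σ)) (ϑ σ) : ℝ))
          MeasureTheory.volume (T k) (T (k+1)) :=
        (hinncurve.mono
          (Set.uIcc_subset_Icc (hTmem k hk.le) (hTmem (k+1) hk))).intervalIntegrable
      rw [h1, ← intervalIntegral.integral_sub hint1 hint2]
      have hpt : ∀ σ ∈ Set.uIoc (T k) (T (k+1)),
          ‖(inner ℝ Fk (ϑ σ) : ℝ) - (inner ℝ (fx (σ, histAt X σ)) (ϑ σ) : ℝ)‖ ≤ ε₁ * Mϑ := by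
        intro σ hσ
        have hσ' := hσ
        rw [Set.uIoc_of_le hTle] at hσ'
        have hσmem : σ ∈ Set.Icc tb s :=
          ⟨le_trans (hTmem k hk.le).1 hσ'.1.le, le_trans hσ'.2 (hTmem (k+1) hk).2⟩
        have he : (inner ℝ Fk (ϑ σ) : ℝ) - (inner ℝ (fx (σ, histAt X σ)) (ϑ σ) : ℝ)
            = (inner ℝ (Fk - fx (σ, histAt X σ)) (ϑ σ) : ℝ) := (inner_sub_left _ _ _).symm
        rw [Real.norm_eq_abs, he]
        calc |(inner ℝ (Fk - fx (σ, histAt X σ)) (ϑ σ) : ℝ)|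
            ≤ ‖Fk - fx (σ, histAt X σ)‖ * ‖ϑ σ‖ := abs_real_inner_le_norm _ _
          _ ≤ ε₁ * Mϑ := mul_le_mul (hFkdiff σ hσ) (hMϑ σ hσmem) (norm_nonneg _)
              hε₁pos.le
      have hb := intervalIntegral.norm_integral_le_of_norm_le_const hpt
      rw [Real.norm_eq_abs] at hb
      have hTd : |T (k+1) - T k| = δ := by
        rw [hTsucc k, show T k + δ - T k = δ by ring, abs_of_nonneg hδpos.le]
      rw [hTd] at hb
      exact hb
    have htri := abs_sub_le
      (∑ j : Fin d, ∫ a in (0:ℝ)..1, w k j * fx (T (k+1), vpert (shift (P k) δ)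
        (stair (w k) (j:ℕ) + (a * w k j) • stdBasis d j)) j)
      ((inner ℝ Fk (w k) : ℝ))
      (∫ σ in (T k)..(T (k+1)), (inner ℝ (fx (σ, histAt X σ)) (ϑ σ) : ℝ))
    linarith [hpart1, hpart2]
  -- error at the left endpoint s
  have hPn : ∀ θ : PathDom, ‖P n θ - X (s + θ.1)‖ ≤ δf/4 := by
    intro θ
    have happ : P n θ = X (clampT tb δ (tb + (n:ℝ) * δ + θ.1)) := approxPath_apply hδpos n θ
    rw [happ]
    have harg : tb + (n:ℝ) * δ + θ.1 = s + θ.1 := by rw [hnδ]; ring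
    rw [harg]
    have hθ : θ.1 ≤ 0 := Set.mem_Iic.mp θ.2
    have hcl1 : clampT tb δ (s + θ.1) ≤ s + θ.1 := clampT_le hδpos
    have hcl2 : s + θ.1 - clampT tb δ (s + θ.1) ≤ δ := clampT_gap hδpos
    apply hXc3
    · linarith
    · linarith
    · rw [abs_le]
      constructor <;> linarith
  have hLHS : |f (s, P n) - f (s, histAt X s)| ≤ ε/2 := by
    have hub0 : ∀ a b : ℝ, a ≤ s → b ≤ s → |a - b| ≤ |s - s| → ‖X a - X b‖ ≤ δf/4 := by
      intro a b ha hb hab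
      rw [sub_self, abs_zero] at hab
      have hab0 : a = b := by
        have := abs_nonneg (a - b)
        have h2 : |a - b| = 0 := le_antisymm hab this
        have := abs_eq_zero.mp h2
        linarith
      subst hab0
      rw [sub_self, norm_zero]
      positivity
    have hdb := dInfty_le_close (X := X) (s := s) (σ₀ := s) (u := s) (y := P n)
      le_rfl le_rfl hub0 hPn
    have hlt : dInfty (s, histAt X s) (s, P n) < δf := by
      have h8 := hdb
      rw [sub_self, abs_zero] at h8
      linarith
    have hP_D0 : (s, P n) ∈ LamHat d t := ⟨le_trans httb hts, hPmem n⟩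
    have h9 := hδf' (s, P n) hP_D0 hlt
    rw [Real.norm_eq_abs] at h9
    exact h9.le
  -- final assembly
  have hEq1 : f (s, P n) - f (tb, histAt X tb)
      = ∑ k ∈ Finset.range n, ((∫ r in (0:ℝ)..δ, ft (T k + r, shift (P k) r))
        + ∑ j : Fin d, ∫ a in (0:ℝ)..1, w k j * fx (T (k+1), vpert (shift (P k) δ)
            (stair (w k) (j:ℕ) + (a * w k j) • stdBasis d j)) j) := by
    have h1 := htel.trans (Finset.sum_congr rfl
      (fun k hk => hstep k (Finset.mem_range.mp hk)))
    rw [hTs, hT0] at h1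
    rw [show P 0 = histAt X tb from rfl] at h1
    exact h1
  have hEq2 : ∫ σ in tb..s, G σ
      = ∑ k ∈ Finset.range n, ((∫ σ in (T k)..(T (k+1)), ft (σ, histAt X σ))
        + ∫ σ in (T k)..(T (k+1)), (inner ℝ (fx (σ, histAt X σ)) (ϑ σ) : ℝ)) := by
    have h1 := hsplit
    rw [hT0, hTs] at h1
    rw [h1]
    refine Finset.sum_congr rfl (fun k hk => ?_)
    have hk' := Finset.mem_range.mp hk
    have hI1 : IntervalIntegrable (fun σ => ft (σ, histAt X σ))
        MeasureTheory.volume (T k) (T (k+1)) :=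
      (hftcurve.mono
        (Set.uIcc_subset_Icc (hTmem k hk'.le) (hTmem (k+1) hk'))).intervalIntegrable
    have hI2 : IntervalIntegrable (fun σ => (inner ℝ (fx (σ, histAt X σ)) (ϑ σ) : ℝ))
        MeasureTheory.volume (T k) (T (k+1)) :=
      (hinncurve.mono
        (Set.uIcc_subset_Icc (hTmem k hk'.le) (hTmem (k+1) hk'))).intervalIntegrable
    exact intervalIntegral.integral_add hI1 hI2
  have hdecomp : f (s, histAt X s) - f (tb, histAt X tb) - ∫ σ in tb..s, G σ
      = (f (s, histAt X s) - f (s, P n))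
        + ∑ k ∈ Finset.range n,
          (((∫ r in (0:ℝ)..δ, ft (T k + r, shift (P k) r))
            + ∑ j : Fin d, ∫ a in (0:ℝ)..1, w k j * fx (T (k+1), vpert (shift (P k) δ)
                (stair (w k) (j:ℕ) + (a * w k j) • stdBasis d j)) j)
          - ((∫ σ in (T k)..(T (k+1)), ft (σ, histAt X σ))
            + ∫ σ in (T k)..(T (k+1)), (inner ℝ (fx (σ, histAt X σ)) (ϑ σ) : ℝ))) := by
    rw [Finset.sum_sub_distrib, ← hEq1, ← hEq2]
    ring
  rw [hdecomp]
  refine le_trans (abs_add_le _ _) ?_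
  have h1 : |f (s, histAt X s) - f (s, P n)| ≤ ε/2 := by
    rw [abs_sub_comm]; exact hLHS
  have h2 : |∑ k ∈ Finset.range n,
      (((∫ r in (0:ℝ)..δ, ft (T k + r, shift (P k) r))
        + ∑ j : Fin d, ∫ a in (0:ℝ)..1, w k j * fx (T (k+1), vpert (shift (P k) δ)
            (stair (w k) (j:ℕ) + (a * w k j) • stdBasis d j)) j)
      - ((∫ σ in (T k)..(T (k+1)), ft (σ, histAt X σ))
        + ∫ σ in (T k)..(T (k+1)), (inner ℝ (fx (σ, histAt X σ)) (ϑ σ) : ℝ)))| ≤ ε/2 := by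
    refine le_trans (Finset.abs_sum_le_sum_abs _ _) ?_
    have hper : ∀ k ∈ Finset.range n,
        |((∫ r in (0:ℝ)..δ, ft (T k + r, shift (P k) r))
          + ∑ j : Fin d, ∫ a in (0:ℝ)..1, w k j * fx (T (k+1), vpert (shift (P k) δ)
              (stair (w k) (j:ℕ) + (a * w k j) • stdBasis d j)) j)
        - ((∫ σ in (T k)..(T (k+1)), ft (σ, histAt X σ))
          + ∫ σ in (T k)..(T (k+1)), (inner ℝ (fx (σ, histAt X σ)) (ϑ σ) : ℝ))|
        ≤ ε₁ * δ + (ε₁ * ((d:ℝ) * (δ * Mϑ)) + ε₁ * Mϑ * δ) := by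
      intro k hk
      have hk' := Finset.mem_range.mp hk
      have hre : ((∫ r in (0:ℝ)..δ, ft (T k + r, shift (P k) r))
          + ∑ j : Fin d, ∫ a in (0:ℝ)..1, w k j * fx (T (k+1), vpert (shift (P k) δ)
              (stair (w k) (j:ℕ) + (a * w k j) • stdBasis d j)) j)
          - ((∫ σ in (T k)..(T (k+1)), ft (σ, histAt X σ))
            + ∫ σ in (T k)..(T (k+1)), (inner ℝ (fx (σ, histAt X σ)) (ϑ σ) : ℝ))
          = ((∫ r in (0:ℝ)..δ, ft (T k + r, shift (P k) r))
              - ∫ σ in (T k)..(T (k+1)), ft (σ, histAt X σ))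
            + ((∑ j : Fin d, ∫ a in (0:ℝ)..1, w k j * fx (T (k+1), vpert (shift (P k) δ)
                (stair (w k) (j:ℕ) + (a * w k j) • stdBasis d j)) j)
              - ∫ σ in (T k)..(T (k+1)), (inner ℝ (fx (σ, histAt X σ)) (ϑ σ) : ℝ)) := by
        ring
      rw [hre]
      exact le_trans (abs_add_le _ _) (add_le_add (hEA k hk') (hEB k hk'))
    refine le_trans (Finset.sum_le_sum hper) ?_
    rw [Finset.sum_const, Finset.card_range, nsmul_eq_mul]
    have hc : (n:ℝ) * (ε₁ * δ + (ε₁ * ((d:ℝ) * (δ * Mϑ)) + ε₁ * Mϑ * δ))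
        = ε₁ * ((s - tb) * (1 + Mϑ * (1 + (d:ℝ)))) := by
      rw [← hnδ]; ring
    rw [hc]
    have hCle : (s - tb) * (1 + Mϑ * (1 + (d:ℝ))) ≤ C₀ := by
      show _ ≤ (s - tb) * (1 + Mϑ * (1 + (d:ℝ))) + 1
      linarith
    calc ε₁ * ((s - tb) * (1 + Mϑ * (1 + (d:ℝ)))) ≤ ε₁ * C₀ :=
          mul_le_mul_of_nonneg_left hCle hε₁pos.le
      _ = ε/2 := by
          rw [hε₁def]
          field_simp
  linarith [h1, h2]
end PathHJB
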